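/- arXiv:1707.02953 — 7 statements merged into one kernel-verified Lean document; each statement's English description precedes it below -/
import Mathlib

section
/- Every finite 3-regular bipartite simple graph admits a string contact representation in ℝ³ of complexity at most 2, i.e., one in which every string is a B₂-string. -/
open Set

/-- Points of ℝ³, identified with triples of real numbers. -/
abbrev Pt3 : Type := Fin 3 → ℝ

/-- A vector is parallel to a coordinate axis if at most one of its
three coordinates is nonzero. -/
def AxisParallel (v : Pt3) : Prop := ∃ i : Fin 3, ∀ j : Fin 3, j ≠ i → v j = 0

/-- An axis-aligned string in ℝ³: a simple polygonal path `pts 0, pts 1, …, pts k`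
(`k ≥ 1`) with consecutive points distinct, each difference parallel to a coordinate
axis, and the path non-self-intersecting (consecutive segments meet exactly at their
common endpoint and non-consecutive segments are disjoint). -/
structure AAString where
  k : ℕ
  pts : Fin (k + 1) → Pt3
  k_pos : 1 ≤ k
  consec_ne : ∀ i : Fin k, pts i.castSucc ≠ pts i.succ
  axis : ∀ i : Fin k, AxisParallel (pts i.succ - pts i.castSucc)
  simple_consec : ∀ i j : Fin k, (i : ℕ) + 1 = (j : ℕ) →
    segment ℝ (pts i.castSucc) (pts i.succ) ∩ segment ℝ (pts j.castSucc) (pts j.succ)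
      = {pts i.succ}
  simple_far : ∀ i j : Fin k, (i : ℕ) + 1 < (j : ℕ) →
    segment ℝ (pts i.castSucc) (pts i.succ) ∩ segment ℝ (pts j.castSucc) (pts j.succ) = ∅

/-- The string, as a subset of ℝ³: the union of its closed segments. -/
def AAString.carrier (S : AAString) : Set Pt3 :=
  ⋃ i : Fin S.k, segment ℝ (S.pts i.castSucc) (S.pts i.succ)

/-- The two endpoints of the string. -/
def AAString.endpoints (S : AAString) : Set Pt3 := {S.pts 0, S.pts (Fin.last S.k)}

/-- The number of bends of the string: one less than its number of segments. -/
def AAString.bends (S : AAString) : ℕ := S.k - 1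

/-- A string contact representation of a simple graph `G`: two distinct strings meet
only at endpoints of one of them, no point lies on three distinct strings, and two
strings intersect iff the corresponding vertices are adjacent. -/
def IsStringContactRep {V : Type*} (G : SimpleGraph V) (Ψ : V → AAString) : Prop :=
  (∀ u v : V, u ≠ v → ∀ p ∈ (Ψ u).carrier ∩ (Ψ v).carrier,
      p ∈ (Ψ u).endpoints ∪ (Ψ v).endpoints) ∧
  (∀ u v w : V, u ≠ v → u ≠ w → v ≠ w →
      ∀ p : Pt3, ¬ (p ∈ (Ψ u).carrier ∧ p ∈ (Ψ v).carrier ∧ p ∈ (Ψ w).carrier)) ∧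
  (∀ u v : V, u ≠ v → (((Ψ u).carrier ∩ (Ψ v).carrier).Nonempty ↔ G.Adj u v))

/-!
A cubic bipartite graph is the union of three perfect matchings (Hall's theorem, applied three
times). Identifying the two colour classes with one set `α` along the first matching, the graph
becomes `bipartiteOfPerms σ τ`, where `a`, `σ a` and `τ a` are pairwise distinct.

Label `α` injectively by numbers `ν a ∈ [1, N]` and represent each vertex by a staple, three
segments along the `y`-, `z`- and `x`-axis. The staple of `a` in the first class starts on the last
segment of the staple of `σ a`, its vertical segment passes through the endpoint of the staple of
`τ a`, and it ends where the staple of `a` in the second class begins. The remaining coordinates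
`zLevel a` and `xLevel a` lie above or below all labels, whichever makes these contacts possible;
then two staples of the same class are separated by a coordinate, and two staples of different
classes meet only at the intended contacts.
-/

theorem mem_segment_iff_of_forall_ne {ι : Type*} {p q x : ι → ℝ} {i : ι}
    (h : ∀ j, j ≠ i → p j = q j) :
    x ∈ segment ℝ p q ↔ (∀ j, j ≠ i → x j = p j) ∧ x i ∈ uIcc (p i) (q i) := by
  classical
  have hp : p = Function.update p i (p i) := (Function.update_eq_self i p).symm
  have hq : q = Function.update p i (q i) := by
    ext j
    by_cases hj : j = i
    · subst hj; simp
    · simp [Function.update_of_ne hj, h j hj]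
  rw [hp, hq, ← Pi.image_update_segment, segment_eq_uIcc]
  constructor
  · rintro ⟨u, hu, rfl⟩
    exact ⟨fun j hj => by simp [Function.update_of_ne hj], by simpa using hu⟩
  · rintro ⟨hx, hxi⟩
    refine ⟨x i, by simpa using hxi, ?_⟩
    ext j
    by_cases hj : j = i
    · subst hj; simp
    · simp [Function.update_of_ne hj, hx j hj]

section Staple

variable {a b c a' b' c' : ℝ} {x : Pt3}

theorem Pt3.eq_vec (h₀ : x 0 = a) (h₁ : x 1 = b) (h₂ : x 2 = c) : x = ![a, b, c] := by
  ext i; fin_cases i <;> simpa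

theorem mem_segment_axis₀ :
    x ∈ segment ℝ ![a, b, c] ![a', b, c] ↔ x 1 = b ∧ x 2 = c ∧ x 0 ∈ uIcc a a' := by
  rw [mem_segment_iff_of_forall_ne (i := 0) (by simp [Fin.forall_fin_succ])]
  simp [Fin.forall_fin_succ, and_assoc]

theorem mem_segment_axis₁ :
    x ∈ segment ℝ ![a, b, c] ![a, b', c] ↔ x 0 = a ∧ x 2 = c ∧ x 1 ∈ uIcc b b' := by
  rw [mem_segment_iff_of_forall_ne (i := 1) (by simp [Fin.forall_fin_succ])]
  simp [Fin.forall_fin_succ, and_assoc]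

theorem mem_segment_axis₂ :
    x ∈ segment ℝ ![a, b, c] ![a, b, c'] ↔ x 0 = a ∧ x 1 = b ∧ x 2 ∈ uIcc c c' := by
  rw [mem_segment_iff_of_forall_ne (i := 2) (by simp [Fin.forall_fin_succ])]
  simp [Fin.forall_fin_succ, and_assoc]

def staple (x₀ y₀ z₀ y₁ z₁ x₁ : ℝ) (hy : y₀ ≠ y₁) (hz : z₀ ≠ z₁) (hx : x₀ ≠ x₁) : AAString where
  k := 3
  pts := ![![x₀, y₀, z₀], ![x₀, y₁, z₀], ![x₀, y₁, z₁], ![x₁, y₁, z₁]]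
  k_pos := by norm_num
  consec_ne i := by
    fin_cases i
    · exact fun h => hy (congrFun h 1)
    · exact fun h => hz (congrFun h 2)
    · exact fun h => hx (congrFun h 0)
  axis i := by
    fin_cases i
    · exact ⟨1, by simp [Fin.forall_fin_succ]⟩
    · exact ⟨2, by simp [Fin.forall_fin_succ]⟩
    · exact ⟨0, by simp [Fin.forall_fin_succ]⟩
  simple_consec i j hij := by
    fin_cases i <;> fin_cases j <;> simp at hij ⊢ <;> ext x
    · simp only [mem_inter_iff, mem_segment_axis₁, mem_segment_axis₂, mem_singleton_iff]
      refine ⟨fun ⟨⟨h₀, h₂, _⟩, _, h₁, _⟩ => Pt3.eq_vec h₀ h₁ h₂, ?_⟩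
      rintro rfl
      simp
    · simp only [mem_inter_iff, mem_segment_axis₀, mem_segment_axis₂, mem_singleton_iff]
      refine ⟨fun ⟨⟨h₀, h₁, _⟩, _, h₂, _⟩ => Pt3.eq_vec h₀ h₁ h₂, ?_⟩
      rintro rfl
      simp
  simple_far i j hij := by
    fin_cases i <;> fin_cases j <;> simp at hij ⊢
    refine eq_empty_of_forall_notMem fun x ⟨h, h'⟩ => hz ?_
    rw [mem_segment_axis₁] at h
    rw [mem_segment_axis₀] at h'
    exact h.2.1.symm.trans h'.2.1

variable {x₀ y₀ z₀ y₁ z₁ x₁ : ℝ} {hy : y₀ ≠ y₁} {hz : z₀ ≠ z₁} {hx : x₀ ≠ x₁}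

theorem mem_staple_carrier :
    x ∈ (staple x₀ y₀ z₀ y₁ z₁ x₁ hy hz hx).carrier ↔
      (x 0 = x₀ ∧ x 2 = z₀ ∧ x 1 ∈ uIcc y₀ y₁) ∨ (x 0 = x₀ ∧ x 1 = y₁ ∧ x 2 ∈ uIcc z₀ z₁) ∨
        (x 1 = y₁ ∧ x 2 = z₁ ∧ x 0 ∈ uIcc x₀ x₁) := by
  simp [AAString.carrier, staple, Fin.exists_fin_succ, mem_segment_axis₀, mem_segment_axis₁,
    mem_segment_axis₂]

theorem staple_endpoints :
    (staple x₀ y₀ z₀ y₁ z₁ x₁ hy hz hx).endpoints = {![x₀, y₀, z₀], ![x₁, y₁, z₁]} := rfl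

end Staple

def bipartiteOfPerms {α : Type*} (σ τ : Equiv.Perm α) : SimpleGraph (α ⊕ α) where
  Adj
    | .inl a, .inr b | .inr b, .inl a => b = a ∨ b = σ a ∨ b = τ a
    | _, _ => False
  symm := ⟨by rintro (a | a) (b | b) h <;> exact h⟩
  loopless := ⟨by rintro (a | a) h <;> exact h⟩

theorem IsStringContactRep.comap {V W : Type*} {G : SimpleGraph V} {H : SimpleGraph W}
    {Ψ : V → AAString} (hΨ : IsStringContactRep G Ψ) (f : H ↪g G) :
    IsStringContactRep H (Ψ ∘ f) :=
  ⟨fun _ _ huv => hΨ.1 _ _ (f.injective.ne huv),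
    fun _ _ _ huv huw hvw => hΨ.2.1 _ _ _ (f.injective.ne huv) (f.injective.ne huw)
      (f.injective.ne hvw),
    fun _ _ huv => (hΨ.2.2 _ _ (f.injective.ne huv)).trans f.map_adj_iff⟩

/-- The graph `bipartiteOfPerms σ τ` together with an injective labelling of `α` by numbers in
`[1, N]`, which serve as coordinates. -/
structure CubicLayout (α : Type*) where
  σ : Equiv.Perm α
  τ : Equiv.Perm α
  σ_ne : ∀ a, σ a ≠ a
  τ_ne : ∀ a, τ a ≠ a
  σ_ne_τ : ∀ a, σ a ≠ τ a
  ν : α → ℝ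
  ν_injective : Function.Injective ν
  N : ℝ
  one_le_ν : ∀ a, 1 ≤ ν a
  ν_le : ∀ a, ν a ≤ N

namespace CubicLayout

noncomputable def ofPerms {α : Type*} [Fintype α] (σ τ : Equiv.Perm α) (hσ : ∀ a, σ a ≠ a)
    (hτ : ∀ a, τ a ≠ a) (hστ : ∀ a, σ a ≠ τ a) : CubicLayout α where
  σ := σ
  τ := τ
  σ_ne := hσ
  τ_ne := hτ
  σ_ne_τ := hστ
  ν a := (Fintype.equivFin α a : ℕ) + 1
  ν_injective a b h := (Fintype.equivFin α).injective (Fin.ext (by simpa using h))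
  N := Fintype.card α
  one_le_ν a := by simp
  ν_le a := by exact_mod_cast (Fintype.equivFin α a).isLt

variable {α : Type*} (S : CubicLayout α) {a b c : α}

@[simp] theorem ν_inj : S.ν a = S.ν b ↔ a = b := S.ν_injective.eq_iff

theorem τ_symm_ne (a : α) : S.τ.symm a ≠ a := by
  rw [Ne, Equiv.symm_apply_eq]
  exact (S.τ_ne a).symm

theorem τ_symm_σ_ne (a : α) : S.τ.symm (S.σ a) ≠ a := by
  rw [Ne, Equiv.symm_apply_eq]
  exact S.σ_ne_τ a

noncomputable def outer (up : Prop) [Decidable up] (a : α) : ℝ :=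
  if up then S.N + 1 + S.ν a else -S.ν a

theorem outer_eq (up : Prop) [Decidable up] (a : α) :
    S.outer up a = S.N + 1 + S.ν a ∨ S.outer up a = -S.ν a := by
  unfold outer; split_ifs <;> simp

theorem outer_ne_ν (up : Prop) [Decidable up] (a b : α) : S.outer up a ≠ S.ν b := by
  have := S.one_le_ν a; have := S.one_le_ν b; have := S.ν_le b
  rcases S.outer_eq up a with h | h <;> rw [h] <;> intro <;> linarith

theorem outer_injective {up up' : Prop} [Decidable up] [Decidable up']
    (h : S.outer up a = S.outer up' b) : a = b := by
  have := S.one_le_ν a; have := S.one_le_ν b; have := S.ν_le a; have := S.ν_le b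
  rcases S.outer_eq up a with ha | ha <;> rcases S.outer_eq up' b with hb | hb <;>
    rw [ha, hb] at h <;> exact S.ν_injective (by linarith)

theorem ν_le_of_outer_mem_uIcc {up up' : Prop} [Decidable up] [Decidable up']
    (h : S.outer up' b ∈ uIcc (S.ν a) (S.outer up a)) : S.ν b ≤ S.ν a := by
  have := S.one_le_ν a; have := S.one_le_ν b; have := S.ν_le a; have := S.ν_le b
  rw [mem_uIcc] at h
  rcases S.outer_eq up a with ha | ha <;> rcases S.outer_eq up' b with hb | hb <;>
    rw [ha, hb] at h <;> rcases h with h | h <;> linarith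

theorem ν_mem_uIcc_outer (hbc : b ≠ c) (a : α) :
    S.ν b ∈ uIcc (S.ν c) (S.outer (S.ν c < S.ν b) a) := by
  have := S.one_le_ν a; have := S.one_le_ν b; have := S.ν_le b
  have hne : S.ν c ≠ S.ν b := by simpa using hbc.symm
  unfold outer
  split_ifs with h
  · exact mem_uIcc_of_le h.le (by linarith)
  · exact mem_uIcc_of_ge (by linarith) (lt_of_le_of_ne (not_lt.1 h) hne.symm).le

noncomputable def zLevel (a : α) : ℝ := S.outer (S.ν (S.σ a) < S.ν (S.τ a)) a

noncomputable def xLevel (a : α) : ℝ := S.outer (S.ν (S.τ.symm a) < S.ν (S.σ.symm a)) a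

theorem ν_τ_mem_uIcc_zLevel (a : α) : S.ν (S.τ a) ∈ uIcc (S.ν (S.σ a)) (S.zLevel a) :=
  S.ν_mem_uIcc_outer (S.σ_ne_τ a).symm a

theorem ν_σ_symm_mem_uIcc_xLevel (a : α) :
    S.ν (S.σ.symm a) ∈ uIcc (S.ν (S.τ.symm a)) (S.xLevel a) := by
  refine S.ν_mem_uIcc_outer ?_ a
  rw [Ne, Equiv.symm_apply_eq]
  exact fun h => S.σ_ne_τ (S.τ.symm a) (h.symm.trans (S.τ.apply_symm_apply a).symm)

@[simp] theorem zLevel_ne_ν : S.zLevel a ≠ S.ν b := S.outer_ne_ν _ a b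

@[simp] theorem xLevel_ne_ν : S.xLevel a ≠ S.ν b := S.outer_ne_ν _ a b

@[simp] theorem ν_ne_zLevel : S.ν b ≠ S.zLevel a := S.zLevel_ne_ν.symm

@[simp] theorem ν_ne_xLevel : S.ν b ≠ S.xLevel a := S.xLevel_ne_ν.symm

@[simp] theorem zLevel_inj : S.zLevel a = S.zLevel b ↔ a = b :=
  ⟨S.outer_injective, fun h => h ▸ rfl⟩

@[simp] theorem xLevel_inj : S.xLevel a = S.xLevel b ↔ a = b :=
  ⟨S.outer_injective, fun h => h ▸ rfl⟩

noncomputable def xString (a : α) : AAString :=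
  staple (S.ν a) (S.ν (S.τ.symm (S.σ a))) (S.ν (S.σ a)) (S.ν a) (S.zLevel a) (S.xLevel a)
    (by simpa using S.τ_symm_σ_ne a) S.ν_ne_zLevel S.ν_ne_xLevel

noncomputable def yString (a : α) : AAString :=
  staple (S.xLevel a) (S.ν a) (S.zLevel a) (S.ν (S.τ.symm a)) (S.ν a) (S.ν (S.τ.symm a))
    (by simpa using (S.τ_symm_ne a).symm) S.zLevel_ne_ν S.xLevel_ne_ν

noncomputable def string : α ⊕ α → AAString := Sum.elim S.xString S.yString

theorem disjoint_xString (hab : a ≠ b) :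
    Disjoint (S.xString a).carrier (S.xString b).carrier := by
  refine Set.disjoint_left.2 fun x hx hx' => ?_
  simp only [xString, mem_staple_carrier] at hx hx'
  rcases hx with ⟨h₀, h₂, -⟩ | ⟨h₀, h₁, -⟩ | ⟨h₁, h₂, -⟩ <;>
    rcases hx' with ⟨h₀', h₂', -⟩ | ⟨h₀', h₁', -⟩ | ⟨h₁', h₂', -⟩ <;> simp_all

theorem disjoint_yString (hab : a ≠ b) :
    Disjoint (S.yString a).carrier (S.yString b).carrier := by
  refine Set.disjoint_left.2 fun x hx hx' => ?_
  simp only [yString, mem_staple_carrier] at hx hx'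
  rcases hx with ⟨h₀, h₂, -⟩ | ⟨h₀, h₁, -⟩ | ⟨h₁, h₂, -⟩ <;>
    rcases hx' with ⟨h₀', h₂', -⟩ | ⟨h₀', h₁', -⟩ | ⟨h₁', h₂', -⟩ <;> simp_all

theorem disjoint_string {p q : α ⊕ α} (hpq : p ≠ q) (hside : p.isLeft = q.isLeft) :
    Disjoint (S.string p).carrier (S.string q).carrier := by
  rcases p with a | a <;> rcases q with b | b <;>
    simp only [Sum.isLeft_inl, Sum.isLeft_inr, reduceCtorEq] at hside
  · exact S.disjoint_xString fun h => hpq (congrArg _ h)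
  · exact S.disjoint_yString fun h => hpq (congrArg _ h)

theorem mem_xString_yString {x : Pt3} (hx : x ∈ (S.xString a).carrier)
    (hy : x ∈ (S.yString b).carrier) :
    (b = a ∨ b = S.σ a ∨ b = S.τ a) ∧ x ∈ (S.xString a).endpoints ∪ (S.yString b).endpoints := by
  simp only [xString, yString, mem_staple_carrier] at hx hy
  simp only [xString, yString, staple_endpoints, mem_union, mem_insert_iff, mem_singleton_iff]
  rcases hx with ⟨h₀, h₂, -⟩ | ⟨h₀, h₁, -⟩ | ⟨h₁, h₂, hx₀⟩ <;>
    rcases hy with ⟨h₀', h₂', -⟩ | ⟨h₀', h₁', hy₂⟩ | ⟨h₁', h₂', -⟩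
  · exact absurd (h₀.symm.trans h₀') S.ν_ne_xLevel
  · exact absurd (h₀.symm.trans h₀') S.ν_ne_xLevel
  · obtain rfl : b = S.σ a := S.ν_inj.1 (h₂'.symm.trans h₂)
    exact ⟨Or.inr (Or.inl rfl), Or.inl (Or.inl (Pt3.eq_vec h₀ h₁' h₂))⟩
  · exact absurd (h₀.symm.trans h₀') S.ν_ne_xLevel
  · exact absurd (h₀.symm.trans h₀') S.ν_ne_xLevel
  · obtain rfl : a = S.τ.symm b := S.ν_inj.1 (h₁.symm.trans h₁')
    exact ⟨Or.inr (Or.inr (S.τ.apply_symm_apply b).symm),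
      Or.inr (Or.inr (Pt3.eq_vec h₀ h₁ h₂'))⟩
  · obtain rfl : b = a := S.zLevel_inj.1 (h₂'.symm.trans h₂)
    exact ⟨Or.inl rfl, Or.inl (Or.inr (Pt3.eq_vec h₀' h₁ h₂))⟩
  · -- the outer levels keep the last segment of `xString a` off the middle one of `yString (τ a)`
    obtain rfl : a = S.τ.symm b := S.ν_inj.1 (h₁.symm.trans h₁')
    rw [h₀'] at hx₀
    rw [h₂, uIcc_comm] at hy₂
    exact absurd (S.ν_inj.1 (le_antisymm (S.ν_le_of_outer_mem_uIcc hy₂)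
      (S.ν_le_of_outer_mem_uIcc hx₀))) (S.τ_symm_ne b)
  · exact absurd (h₂.symm.trans h₂') S.zLevel_ne_ν

theorem xString_inter_yString_nonempty (h : b = a ∨ b = S.σ a ∨ b = S.τ a) :
    ((S.xString a).carrier ∩ (S.yString b).carrier).Nonempty := by
  rcases h with rfl | rfl | rfl
  · exact ⟨![S.xLevel b, S.ν b, S.zLevel b], by simp [xString, yString, mem_staple_carrier]⟩
  · have := S.ν_σ_symm_mem_uIcc_xLevel (S.σ a)
    rw [Equiv.symm_apply_apply, uIcc_comm] at this
    exact ⟨![S.ν a, S.ν (S.τ.symm (S.σ a)), S.ν (S.σ a)],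
      by simp [xString, yString, mem_staple_carrier, this]⟩
  · exact ⟨![S.ν a, S.ν a, S.ν (S.τ a)],
      by simp [xString, yString, mem_staple_carrier, S.ν_τ_mem_uIcc_zLevel a]⟩

theorem inter_string_nonempty_iff_adj {a b : α} :
    ((S.xString a).carrier ∩ (S.yString b).carrier).Nonempty ↔
      (bipartiteOfPerms S.σ S.τ).Adj (.inl a) (.inr b) :=
  ⟨fun ⟨_, hx, hy⟩ => (S.mem_xString_yString hx hy).1, S.xString_inter_yString_nonempty⟩

theorem isStringContactRep_string : IsStringContactRep (bipartiteOfPerms S.σ S.τ) S.string := by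
  refine ⟨?_, fun p q w hpq hpw hqw x ⟨hp, hq, hw⟩ => ?_, ?_⟩
  · rintro (a | a) (b | b) hpq x ⟨hx, hy⟩
    · exact ((S.disjoint_string hpq rfl).notMem_of_mem_left hx hy).elim
    · exact (S.mem_xString_yString hx hy).2
    · exact union_comm _ _ ▸ (S.mem_xString_yString hy hx).2
    · exact ((S.disjoint_string hpq rfl).notMem_of_mem_left hx hy).elim
  · have two_sides : ∀ x y z : Bool, x = y ∨ x = z ∨ y = z := by decide
    rcases two_sides p.isLeft q.isLeft w.isLeft with h | h | h
    · exact (S.disjoint_string hpq h).notMem_of_mem_left hp hq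
    · exact (S.disjoint_string hpw h).notMem_of_mem_left hp hw
    · exact (S.disjoint_string hqw h).notMem_of_mem_left hq hw
  · rintro (a | a) (b | b) hpq
    · simpa [bipartiteOfPerms, not_nonempty_iff_eq_empty] using
        (S.disjoint_string hpq rfl).inter_eq
    · exact S.inter_string_nonempty_iff_adj
    · exact inter_comm (S.string _).carrier _ ▸ S.inter_string_nonempty_iff_adj
    · simpa [bipartiteOfPerms, not_nonempty_iff_eq_empty] using
        (S.disjoint_string hpq rfl).inter_eq

theorem bends_string (p : α ⊕ α) : (S.string p).bends = 2 := by
  rcases p with a | a <;> rfl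

end CubicLayout

section RegularRelation

open Finset

variable {β γ : Type*} [Fintype β] [Fintype γ] (r : β → γ → Prop) [DecidableRel r] {d : ℕ}

theorem card_eq_card_of_regular (hd : 0 < d) (hβ : ∀ b, #{c | r b c} = d)
    (hγ : ∀ c, #{b | r b c} = d) :
    Fintype.card β = Fintype.card γ := by
  refine Nat.eq_of_mul_eq_mul_right hd (card_mul_eq_card_mul r (s := univ) (t := univ)
    (fun b _ => ?_) (fun c _ => ?_))
  · simpa [bipartiteAbove] using hβ b
  · simpa [bipartiteBelow] using hγ c

theorem exists_equiv_of_regular (hd : 0 < d) (hβ : ∀ b, #{c | r b c} = d)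
    (hγ : ∀ c, #{b | r b c} = d) : ∃ f : β ≃ γ, ∀ b, r b (f b) := by
  have hall (A : Finset β) : #A ≤ #{c | ∃ b ∈ A, r b c} := by
    refine Nat.le_of_mul_le_mul_right
      (card_mul_le_card_mul r (fun b hb => ?_) (fun c _ => ?_)) hd
    · refine (hβ b).symm.le.trans (Finset.card_le_card fun c hc => ?_)
      simp only [mem_filter, Finset.mem_univ, true_and, mem_bipartiteAbove] at hc ⊢
      exact ⟨⟨b, hb, hc⟩, hc⟩
    · exact (Finset.card_le_card fun b hb => by simp_all [mem_bipartiteBelow]).trans (hγ c).le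
  obtain ⟨f, hf, hrf⟩ := (Fintype.all_card_le_filter_rel_iff_exists_injective r).1 hall
  exact ⟨Equiv.ofBijective f ((Fintype.bijective_iff_injective_and_card f).2
    ⟨hf, card_eq_card_of_regular r hd hβ hγ⟩), hrf⟩

theorem exists_equivs_of_regular (d : ℕ) (hβ : ∀ b, #{c | r b c} = d)
    (hγ : ∀ c, #{b | r b c} = d) :
    ∃ f : Fin d → β ≃ γ, (∀ b, Function.Injective fun i => f i b) ∧
      ∀ b c, r b c ↔ ∃ i, f i b = c := by
  classical
  induction d generalizing r with
  | zero =>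
    refine ⟨Fin.elim0, fun _ i => i.elim0, fun b c => ?_⟩
    simpa using filter_eq_empty_iff.1 (card_eq_zero.1 (hβ b)) (Finset.mem_univ c)
  | succ d ih =>
    obtain ⟨f₀, hf₀⟩ := exists_equiv_of_regular r d.succ_pos hβ hγ
    have hβ' (b : β) : #{c | r b c ∧ c ≠ f₀ b} = d := by
      have : ({c | r b c ∧ c ≠ f₀ b} : Finset γ) = ({c | r b c} : Finset γ).erase (f₀ b) := by
        ext; simp [and_comm]
      rw [this, card_erase_of_mem (by simpa using hf₀ b), hβ, Nat.add_sub_cancel]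
    have hγ' (c : γ) : #{b | r b c ∧ c ≠ f₀ b} = d := by
      have : ({b | r b c ∧ c ≠ f₀ b} : Finset β) =
          ({b | r b c} : Finset β).erase (f₀.symm c) := by
        ext; simp [Equiv.eq_symm_apply, eq_comm, and_comm]
      rw [this, card_erase_of_mem (by simpa using hf₀ (f₀.symm c)), hγ, Nat.add_sub_cancel]
    obtain ⟨f, hf_inj, hf⟩ := ih (fun b c => r b c ∧ c ≠ f₀ b) hβ' hγ'
    refine ⟨Fin.cons f₀ f, fun b => ?_, fun b c => ?_⟩
    · have : (fun i => (Fin.cons f₀ f : Fin (d + 1) → β ≃ γ) i b) =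
          Fin.cons (f₀ b) (fun i => f i b) := by
        ext i; cases i using Fin.cases <;> simp
      rw [this, Fin.cons_injective_iff]
      exact ⟨fun ⟨i, hi⟩ => ((hf b _).2 ⟨i, rfl⟩).2 hi, hf_inj b⟩
    · simp only [Fin.exists_fin_succ, Fin.cons_zero, Fin.cons_succ, ← hf]
      by_cases hc : c = f₀ b
      · simp [hc, hf₀]
      · simp [hc, Ne.symm hc]

end RegularRelation

namespace SimpleGraph

open Finset

variable {V : Type*} [Fintype V] {G : SimpleGraph V} [DecidableRel G.Adj]

theorem card_subtype_adj_eq_degree {p : V → Prop} [DecidablePred p] {v : V}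
    (h : ∀ w, G.Adj v w → p w) :
    #{w : Subtype p | G.Adj v w} = G.degree v := by
  rw [← card_neighborFinset_eq_degree, ← card_map (Function.Embedding.subtype p)]
  congr 1
  ext w
  simp only [mem_map, mem_filter, Finset.mem_univ, true_and, Function.Embedding.coe_subtype,
    mem_neighborFinset]
  exact ⟨fun ⟨w, hw, hw'⟩ => hw' ▸ hw, fun hw => ⟨⟨w, h w hw⟩, hw, rfl⟩⟩

theorem exists_iso_bipartiteOfPerms (hreg : G.IsRegularOfDegree 3) (c : G.Coloring (Fin 2)) :
    ∃ σ τ : Equiv.Perm {v // c v = 0}, (∀ a, σ a ≠ a) ∧ (∀ a, τ a ≠ a) ∧ (∀ a, σ a ≠ τ a) ∧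
      Nonempty (bipartiteOfPerms σ τ ≃g G) := by
  classical
  have not_adj_of_ne_zero {u v : V} (hu : c u ≠ 0) (hv : c v ≠ 0) : ¬ G.Adj u v := fun h =>
    c.valid h (by omega)
  have hβ (b : {v // c v = 0}) : #{w : {v // c v ≠ 0} | G.Adj b w} = 3 :=
    (card_subtype_adj_eq_degree fun w hw => b.2 ▸ (c.valid hw).symm).trans (hreg b)
  have hγ (w : {v // c v ≠ 0}) : #{b : {v // c v = 0} | G.Adj b w} = 3 := by
    simp_rw [G.adj_comm _ w.1]
    refine (card_subtype_adj_eq_degree fun b hb => ?_).trans (hreg w)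
    exact by_contra fun h => not_adj_of_ne_zero w.2 h hb
  obtain ⟨f, hf_inj, hf⟩ := exists_equivs_of_regular
    (fun (b : {v // c v = 0}) (w : {v // c v ≠ 0}) => G.Adj b w) 3 hβ hγ
  have hne {i j : Fin 3} (hij : i ≠ j) (a) : (f j).symm (f i a) ≠ a := by
    rw [Ne, Equiv.symm_apply_eq]
    exact fun h => hij (hf_inj a h)
  refine ⟨(f 1).trans (f 0).symm, (f 2).trans (f 0).symm, hne (by decide), hne (by decide),
    fun a h => ?_, ⟨⟨(Equiv.sumCongr (Equiv.refl _) (f 0)).trans (Equiv.sumCompl _), ?_⟩⟩⟩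
  · exact absurd (hf_inj a ((f 0).symm.injective h)) (by decide)
  · have hmixed (a b : {v // c v = 0}) :
        G.Adj a (f 0 b) ↔ b = a ∨ b = (f 0).symm (f 1 a) ∨ b = (f 0).symm (f 2 a) := by
      rw [hf, Fin.exists_fin_succ, Fin.exists_fin_succ, Fin.exists_fin_one]
      simp only [Equiv.eq_symm_apply, EmbeddingLike.apply_eq_iff_eq]
      exact or_congr eq_comm (or_congr eq_comm eq_comm)
    rintro (a | a) (b | b)
    · simpa [bipartiteOfPerms] using fun h => c.valid h (a.2.trans b.2.symm)
    · simpa [bipartiteOfPerms] using hmixed a b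
    · simpa [bipartiteOfPerms, G.adj_comm] using hmixed b a
    · simpa [bipartiteOfPerms] using not_adj_of_ne_zero (f 0 a).2 (f 0 b).2

end SimpleGraph

theorem cubic_bipartite_stringContactRep_general {V : Type*} [Fintype V]
    (G : SimpleGraph V) [DecidableRel G.Adj]
    (hreg : G.IsRegularOfDegree 3) (hbip : G.Colorable 2) :
    ∃ Ψ : V → AAString, IsStringContactRep G Ψ ∧ ∀ v : V, (Ψ v).bends ≤ 2 := by
  obtain ⟨c⟩ := hbip
  obtain ⟨σ, τ, hσ, hτ, hστ, ⟨e⟩⟩ := G.exists_iso_bipartiteOfPerms hreg c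
  let S := CubicLayout.ofPerms σ τ hσ hτ hστ
  exact ⟨S.string ∘ e.symm, S.isStringContactRep_string.comap e.symm.toEmbedding,
    fun v => (S.bends_string _).le⟩

/-- Every finite 3-regular bipartite simple graph admits a string contact
representation in ℝ³ of complexity at most 2 (every string is a `B₂`-string). -/
theorem cubic_bipartite_stringContactRep {V : Type*} [Fintype V] [DecidableEq V]
    (G : SimpleGraph V) [DecidableRel G.Adj]
    (hreg : G.IsRegularOfDegree 3) (hbip : G.Colorable 2) :
    ∃ Ψ : V → AAString, IsStringContactRep G Ψ ∧ ∀ v : V, (Ψ v).bends ≤ 2 :=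
  cubic_bipartite_stringContactRep_general G hreg hbip
end

section
/- No finite nonempty 5-regular simple graph admits a string contact representation in ℝ³. -/
open Set

/-- Pick an endpoint of a string according to a boolean. -/
noncomputable def epPt (S : AAString) (b : Bool) : Pt3 :=
  if b then S.pts 0 else S.pts (Fin.last S.k)

lemma exists_epPt (S : AAString) (p : Pt3) (h : p ∈ S.endpoints) : ∃ b, epPt S b = p := by
  rcases h with h | h
  · exact ⟨true, by simp [epPt, h]⟩
  · exact ⟨false, by simpa [epPt] using h.symm⟩

/-- No finite nonempty 5-regular simple graph admits a string contact representation
in ℝ³. -/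
theorem fiveRegular_no_stringContactRep {V : Type*} [Fintype V] [Nonempty V]
    (G : SimpleGraph V) [DecidableRel G.Adj]
    (hreg : G.IsRegularOfDegree 5) :
    ¬ ∃ Ψ : V → AAString, IsStringContactRep G Ψ := by
  rintro ⟨Ψ, hcontact, hthree, hiff⟩
  classical
  have key : ∀ e ∈ G.edgeFinset, ∃ wb : V × Bool, wb.1 ∈ e ∧
      ∀ x ∈ e, x ≠ wb.1 → epPt (Ψ wb.1) wb.2 ∈ (Ψ wb.1).carrier ∩ (Ψ x).carrier := by
    intro e he
    induction e using Sym2.ind with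
    | _ u v =>
      rw [SimpleGraph.mem_edgeFinset, SimpleGraph.mem_edgeSet] at he
      have hne : u ≠ v := he.ne
      obtain ⟨p, hpu, hpv⟩ := (hiff u v hne).mpr he
      rcases hcontact u v hne p ⟨hpu, hpv⟩ with h | h
      · obtain ⟨b, hb⟩ := exists_epPt _ _ h
        refine ⟨(u, b), Sym2.mem_mk_left u v, ?_⟩
        intro x hx hxu
        have hxv : x = v := by
          rcases Sym2.mem_iff.mp hx with h' | h'
          · exact absurd h' hxu
          · exact h'
        subst hxv
        rw [hb]; exact ⟨hpu, hpv⟩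
      · obtain ⟨b, hb⟩ := exists_epPt _ _ h
        refine ⟨(v, b), Sym2.mem_mk_right u v, ?_⟩
        intro x hx hxv
        have hxu : x = u := by
          rcases Sym2.mem_iff.mp hx with h' | h'
          · exact h'
          · exact absurd h' hxv
        subst hxu
        rw [hb]; exact ⟨hpv, hpu⟩
  choose f hf1 hf2 using key
  have hcV : 1 ≤ Fintype.card V := Fintype.card_pos
  have hsum : 2 * G.edgeFinset.card = 5 * Fintype.card V := by
    have := G.sum_degrees_eq_twice_card_edges
    have h5 : ∑ v : V, G.degree v = 5 * Fintype.card V := by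
      simp [hreg _, Finset.sum_const, Finset.card_univ, Nat.mul_comm]
    omega
  have hcard : (Finset.univ : Finset (V × Bool)).card < G.edgeFinset.card := by
    have : Fintype.card (V × Bool) = 2 * Fintype.card V := by
      simp [Fintype.card_prod, Nat.mul_comm]
    rw [Finset.card_univ, this]
    omega
  set F : Sym2 V → V × Bool := fun e =>
    if h : e ∈ G.edgeFinset then f e h else (Classical.arbitrary V, true) with hF
  obtain ⟨e1, he1, e2, he2, hne12, hFeq⟩ :=
    Finset.exists_ne_map_eq_of_card_lt_of_maps_to hcard
      (fun e (_ : e ∈ G.edgeFinset) => Finset.mem_univ (F e))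
  rw [hF] at hFeq
  simp only [dif_pos he1, dif_pos he2] at hFeq
  have hd1 : ¬ e1.IsDiag := G.not_isDiag_of_mem_edgeSet (SimpleGraph.mem_edgeFinset.mp he1)
  have hd2 : ¬ e2.IsDiag := G.not_isDiag_of_mem_edgeSet (SimpleGraph.mem_edgeFinset.mp he2)
  have hw1 := hf1 e1 he1
  have hw2 := hf1 e2 he2
  set w := (f e1 he1).1 with hw
  have hw2' : w ∈ e2 := by rw [hw, hFeq]; exact hw2
  set x1 := Sym2.Mem.other hw1 with hx1
  set x2 := Sym2.Mem.other hw2' with hx2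
  have hx1ne : x1 ≠ w := Sym2.other_ne hd1 hw1
  have hx2ne : x2 ≠ w := Sym2.other_ne hd2 hw2'
  have he1eq : s(w, x1) = e1 := Sym2.other_spec hw1
  have he2eq : s(w, x2) = e2 := Sym2.other_spec hw2'
  have hx12 : x1 ≠ x2 := by
    intro h
    apply hne12
    rw [← he1eq, ← he2eq, h]
  have hp1 := hf2 e1 he1 x1 (by rw [← he1eq]; exact Sym2.mem_mk_right w x1) hx1ne
  have hp2' := hf2 e2 he2 x2 (by rw [← he2eq]; exact Sym2.mem_mk_right w x2)
    (fun h => hx2ne (h.trans ((congrArg Prod.fst hFeq).symm.trans hw.symm)))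
  rw [← hFeq] at hp2'
  exact hthree w x1 x2 (Ne.symm hx1ne) (Ne.symm hx2ne) hx12 _ ⟨hp1.1, hp1.2, hp2'.2⟩
end

section
/- The complete graph K₅ on 5 vertices admits no string contact representation in ℝ³ in which every string is a B₁-string (L-shape). -/
open Set

/-!
A contact point of two strings is an end of one of them and lies on no third string, so the ten
edges of `K₅` use up the ten ends of the five strings: every end lies in the interior of another
string, and distinct strings share only finitely many points.

Fix distinct axes `i`, `j` and nonzero signs `σ`, `τ`, and consider the line of points whose
`(σ xᵢ, τ xⱼ)` is lexicographically maximal among the points `pts n` of all strings. A string through this line either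
bends there into an L whose legs descend in `σ xᵢ` and in `τ xⱼ`, or runs along the line to one of
its ends. Such an end lands in the interior of another string which, as segments of distinct
strings cannot overlap, bends there into an L of that type or continues in the same direction to an
end further along. Hence some string is an L of type `(i, j, σ, τ)`. An L has only one type, and
the eight types with `i ∈ {0, 1}`, `j = 2` would need eight different strings.
-/

lemma apply_mem_uIcc {ι : Type*} {P Q t : ι → ℝ} (ht : t ∈ segment ℝ P Q) (c : ι) :
    t c ∈ uIcc (P c) (Q c) := by
  rw [← segment_eq_uIcc]
  obtain ⟨x, y, hx, hy, hxy, rfl⟩ := ht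
  exact ⟨x, y, hx, hy, hxy, rfl⟩

lemma segment_infinite {E : Type*} [AddCommGroup E] [Module ℝ E] {P Q : E} (h : P ≠ Q) :
    (segment ℝ P Q).Infinite := by
  rw [segment_eq_image_lineMap]
  exact (Set.Icc_infinite zero_lt_one).image (AffineMap.lineMap_injective ℝ h).injOn

def AxisSeg (P Q : Pt3) (a : Fin 3) : Prop := (∀ c, c ≠ a → P c = Q c) ∧ P a ≠ Q a

lemma exists_axisSeg {P Q : Pt3} (hne : P ≠ Q) (h : AxisParallel (Q - P)) : ∃ a, AxisSeg P Q a := by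
  obtain ⟨a, ha⟩ := h
  have hc : ∀ c, c ≠ a → P c = Q c := fun c hc => (sub_eq_zero.mp (ha c hc)).symm
  refine ⟨a, hc, fun hPa => hne (funext fun c => ?_)⟩
  by_cases h : c = a
  · exact h ▸ hPa
  · exact hc c h

namespace AxisSeg

variable {P Q t A B : Pt3} {a : Fin 3}

lemma symm (h : AxisSeg P Q a) : AxisSeg Q P a :=
  ⟨fun c hc => (h.1 c hc).symm, h.2.symm⟩

lemma ne (h : AxisSeg P Q a) : P ≠ Q := fun hPQ => h.2 (congrFun hPQ a)

lemma axis_unique {a' : Fin 3} (h : AxisSeg P Q a) (h' : AxisSeg P Q a') : a = a' := by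
  by_contra haa
  exact h'.2 (h.1 a' (Ne.symm haa))

lemma apply_eq_of_mem (h : AxisSeg P Q a) (ht : t ∈ segment ℝ P Q) {c : Fin 3} (hc : c ≠ a) :
    t c = Q c := by
  simpa [h.1 c hc] using apply_mem_uIcc ht c

lemma of_mem_segment (h : AxisSeg P Q a) (ht : t ∈ segment ℝ P Q) (htQ : t ≠ Q) :
    AxisSeg t Q a := by
  refine ⟨fun c hc => h.apply_eq_of_mem ht hc, fun hta => htQ (funext fun c => ?_)⟩
  by_cases hc : c = a
  · exact hc ▸ hta
  · exact h.apply_eq_of_mem ht hc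

lemma of_mem_segment_left (h : AxisSeg P Q a) (ht : t ∈ segment ℝ P Q) (htP : t ≠ P) :
    AxisSeg t P a :=
  h.symm.of_mem_segment (segment_symm ℝ P Q ▸ ht) htP

lemma mul_neg_of_mem_segment (h : AxisSeg P Q a) (ht : t ∈ segment ℝ P Q) (htP : t ≠ P)
    (htQ : t ≠ Q) : (P a - t a) * (Q a - t a) < 0 := by
  have hP := (h.of_mem_segment_left ht htP).2
  have hQ := (h.of_mem_segment ht htQ).2
  rcases mem_uIcc.mp (apply_mem_uIcc ht a) with ⟨h1, h2⟩ | ⟨h1, h2⟩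
  · exact mul_neg_of_neg_of_pos (by linarith [lt_of_le_of_ne h1 (Ne.symm hP)])
      (by linarith [lt_of_le_of_ne h2 hQ])
  · exact mul_neg_of_pos_of_neg (by linarith [lt_of_le_of_ne h2 hP])
      (by linarith [lt_of_le_of_ne h1 (Ne.symm hQ)])

lemma mem_segment_of_abs_le (hA : AxisSeg t A a) (hB : AxisSeg t B a)
    (hAB : 0 < (A a - t a) * (B a - t a)) (hle : |A a - t a| ≤ |B a - t a|) :
    A ∈ segment ℝ t B := by
  have hB0 : B a - t a ≠ 0 := sub_ne_zero.mpr hB.2.symm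
  set θ := (A a - t a) / (B a - t a) with hθ
  have hθ0 : 0 < θ := by
    rw [hθ, ← mul_div_mul_right _ _ hB0]
    exact div_pos hAB (mul_self_pos.mpr hB0)
  have hθ1 : θ ≤ 1 := by
    rw [← abs_of_pos hθ0, hθ, abs_div]
    exact div_le_one_of_le₀ hle (abs_nonneg _)
  refine ⟨1 - θ, θ, by linarith, hθ0.le, by ring, funext fun c => ?_⟩
  simp only [Pi.add_apply, Pi.smul_apply, smul_eq_mul]
  by_cases hc : c = a
  · subst hc
    rw [hθ]
    field_simp
    ring
  · rw [← hB.1 c hc, ← hA.1 c hc]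
    ring

lemma inter_infinite (hA : AxisSeg t A a) (hB : AxisSeg t B a)
    (hAB : 0 < (A a - t a) * (B a - t a)) : (segment ℝ t A ∩ segment ℝ t B).Infinite := by
  rcases le_total |A a - t a| |B a - t a| with hle | hle
  · have hsub := (convex_segment t B).segment_subset (left_mem_segment ℝ t B)
      (hA.mem_segment_of_abs_le hB hAB hle)
    exact (segment_infinite hA.ne).mono (subset_inter subset_rfl hsub)
  · have hsub := (convex_segment t A).segment_subset (left_mem_segment ℝ t A)
      (hB.mem_segment_of_abs_le hA (by linarith [mul_comm (A a - t a) (B a - t a)]) hle)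
    exact (segment_infinite hB.ne).mono (subset_inter hsub subset_rfl)

end AxisSeg

namespace AAString

variable (S : AAString)

def tip : Bool → Pt3
  | true => S.pts 0
  | false => S.pts (Fin.last S.k)

def mate : Bool → Pt3
  | true => S.pts ⟨1, Nat.succ_lt_succ S.k_pos⟩
  | false => S.pts ⟨S.k - 1, by omega⟩

variable {S}

lemma pts_congr {m n : Fin (S.k + 1)} (h : (m : ℕ) = n) : S.pts m = S.pts n :=
  congrArg S.pts (Fin.ext h)

lemma mem_endpoints_iff {p : Pt3} : p ∈ S.endpoints ↔ ∃ b, S.tip b = p := by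
  rw [Bool.exists_bool]
  simp [endpoints, tip, eq_comm, or_comm]

lemma finite_endpoints : S.endpoints.Finite :=
  (finite_singleton _).insert _

lemma mate_mem_range (b : Bool) : S.mate b ∈ range S.pts := by
  cases b <;> exact ⟨_, rfl⟩

lemma tip_mem_range (b : Bool) : S.tip b ∈ range S.pts := by
  cases b <;> exact ⟨_, rfl⟩

lemma exists_axisSeg_pts (n : Fin S.k) : ∃ a, AxisSeg (S.pts n.castSucc) (S.pts n.succ) a :=
  exists_axisSeg (S.consec_ne n) (S.axis n)

lemma exists_tip_of_idx (hk : S.k ≤ 2) (n : Fin S.k) : ∃ b,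
    (S.pts n.castSucc = S.tip b ∧ S.pts n.succ = S.mate b) ∨
      (S.pts n.castSucc = S.mate b ∧ S.pts n.succ = S.tip b) := by
  have := n.isLt
  rcases Nat.lt_or_ge (n : ℕ) 1 with h | h
  · exact ⟨true, .inl ⟨pts_congr (by simp; omega), pts_congr (by simp; omega)⟩⟩
  · exact ⟨false, .inr ⟨pts_congr (by simp; omega), pts_congr (by simp; omega)⟩⟩

lemma exists_idx_of_tip (b : Bool) : ∃ n : Fin S.k,
    (S.pts n.castSucc = S.tip b ∧ S.pts n.succ = S.mate b) ∨
      (S.pts n.castSucc = S.mate b ∧ S.pts n.succ = S.tip b) := by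
  have := S.k_pos
  cases b
  · exact ⟨⟨S.k - 1, by omega⟩, .inr ⟨pts_congr rfl, pts_congr (by simp; omega)⟩⟩
  · exact ⟨⟨0, S.k_pos⟩, .inl ⟨pts_congr rfl, pts_congr rfl⟩⟩

lemma segment_mate_tip_subset (b : Bool) : segment ℝ (S.mate b) (S.tip b) ⊆ S.carrier := by
  obtain ⟨n, ⟨h1, h2⟩ | ⟨h1, h2⟩⟩ := S.exists_idx_of_tip b
  · rw [segment_symm, ← h1, ← h2]
    exact subset_iUnion (fun n : Fin S.k => segment ℝ (S.pts n.castSucc) (S.pts n.succ)) n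
  · rw [← h1, ← h2]
    exact subset_iUnion (fun n : Fin S.k => segment ℝ (S.pts n.castSucc) (S.pts n.succ)) n

lemma tip_mem_carrier (b : Bool) : S.tip b ∈ S.carrier :=
  S.segment_mate_tip_subset b (right_mem_segment ℝ _ _)

lemma exists_axisSeg_mate_tip (b : Bool) : ∃ a, AxisSeg (S.mate b) (S.tip b) a := by
  obtain ⟨n, ⟨h1, h2⟩ | ⟨h1, h2⟩⟩ := S.exists_idx_of_tip b <;>
    obtain ⟨a, ha⟩ := S.exists_axisSeg_pts n
  · exact ⟨a, h1 ▸ h2 ▸ ha.symm⟩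
  · exact ⟨a, h1 ▸ h2 ▸ ha⟩

lemma exists_mem_segment_mate_tip (hk : S.k ≤ 2) {t : Pt3} (ht : t ∈ S.carrier) :
    ∃ b, t ∈ segment ℝ (S.mate b) (S.tip b) := by
  obtain ⟨n, hn⟩ := mem_iUnion.mp ht
  obtain ⟨b, ⟨h1, h2⟩ | ⟨h1, h2⟩⟩ := S.exists_tip_of_idx hk n
  · exact ⟨b, by rwa [segment_symm, ← h1, ← h2]⟩
  · exact ⟨b, by rwa [← h1, ← h2]⟩

lemma tip_or_bend_of_mem_range (hk : S.k ≤ 2) {p : Pt3} (hp : p ∈ range S.pts) :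
    (∃ b, S.tip b = p) ∨ (S.k = 2 ∧ ∀ b, S.mate b = p) := by
  obtain ⟨n, rfl⟩ := hp
  have := n.isLt
  by_cases h0 : (n : ℕ) = 0
  · exact .inl ⟨true, pts_congr (by simp [h0])⟩
  by_cases hlast : (n : ℕ) = S.k
  · exact .inl ⟨false, pts_congr (by simp [hlast])⟩
  refine .inr ⟨by omega, fun b => ?_⟩
  cases b <;> exact pts_congr (by simp; omega)

lemma eq_bend_or_mem_interior (hk : S.k ≤ 2) {t : Pt3} (ht : t ∈ S.carrier)
    (hte : t ∉ S.endpoints) : (S.k = 2 ∧ ∀ b, S.mate b = t) ∨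
      ∃ b, t ∈ segment ℝ (S.mate b) (S.tip b) ∧ t ≠ S.mate b ∧ t ≠ S.tip b := by
  obtain ⟨b, hb⟩ := S.exists_mem_segment_mate_tip hk ht
  have htip : t ≠ S.tip b := fun h => hte (mem_endpoints_iff.mpr ⟨b, h.symm⟩)
  by_cases hmate : t = S.mate b
  · rcases S.tip_or_bend_of_mem_range hk (hmate ▸ S.mate_mem_range b) with h | h
    · exact absurd (mem_endpoints_iff.mpr h) hte
    · exact .inl h
  · exact .inr ⟨b, hb, hmate, htip⟩

lemma legs_inter_finite (hk : S.k = 2) :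
    (segment ℝ (S.mate true) (S.tip true) ∩ segment ℝ (S.mate false) (S.tip false)).Finite := by
  have h := S.simple_consec ⟨0, by omega⟩ ⟨1, by omega⟩ rfl
  rw [show S.tip true = S.pts (Fin.castSucc ⟨0, by omega⟩) from pts_congr rfl,
    show S.mate true = S.pts (Fin.succ ⟨0, by omega⟩) from pts_congr rfl,
    show S.mate false = S.pts (Fin.castSucc ⟨1, by omega⟩) from pts_congr (by simp; omega),
    show S.tip false = S.pts (Fin.succ ⟨1, by omega⟩) from pts_congr (by simp; omega),
    segment_symm, h]
  exact finite_singleton _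

end AAString

def TipTouches {V : Type*} (Ψ : V → AAString) (s : V × Bool) (e : Sym2 V) : Prop :=
  ∃ w, w ≠ s.1 ∧ e = s(s.1, w) ∧ (Ψ s.1).tip s.2 ∈ (Ψ w).carrier

def TipsLandInInteriors {ι : Type*} (Ψ : ι → AAString) : Prop :=
  ∀ v b, ∃ w ≠ v, (Ψ v).tip b ∈ (Ψ w).carrier ∧ (Ψ v).tip b ∉ (Ψ w).endpoints

namespace IsStringContactRep

variable {V : Type*} {G : SimpleGraph V} {Ψ : V → AAString}

lemma pairwise_finite_inter (h : IsStringContactRep G Ψ) :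
    Pairwise fun u w => ((Ψ u).carrier ∩ (Ψ w).carrier).Finite :=
  fun u w huw => ((Ψ u).finite_endpoints.union (Ψ w).finite_endpoints).subset (h.1 u w huw)

lemma eq_of_tipTouches (h : IsStringContactRep G Ψ) {s : V × Bool} {e e' : Sym2 V}
    (he : TipTouches Ψ s e) (he' : TipTouches Ψ s e') : e = e' := by
  obtain ⟨w, hw, rfl, hmem⟩ := he
  obtain ⟨w', hw', rfl, hmem'⟩ := he'
  by_cases hww : w = w'
  · rw [hww]
  · exact absurd ⟨(Ψ s.1).tip_mem_carrier s.2, hmem, hmem'⟩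
      (h.2.1 s.1 w w' hw.symm hw'.symm hww _)

lemma exists_tipTouches (h : IsStringContactRep G Ψ) {e : Sym2 V} (he : e ∈ G.edgeSet) :
    ∃ s, TipTouches Ψ s e := by
  induction e using Sym2.ind with | _ u w => ?_
  have huw : u ≠ w := G.ne_of_adj he
  obtain ⟨p, hp⟩ := (h.2.2 u w huw).mpr he
  rcases h.1 u w huw p hp with hpu | hpw
  · obtain ⟨b, rfl⟩ := AAString.mem_endpoints_iff.mp hpu
    exact ⟨(u, b), w, huw.symm, rfl, hp.2⟩
  · obtain ⟨b, rfl⟩ := AAString.mem_endpoints_iff.mp hpw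
    exact ⟨(w, b), u, huw, Sym2.eq_swap, hp.1⟩

/-- Each edge is touched by an end lying on no third string, so with `2 |V|` ends and at
least `2 |V|` edges every end is used by exactly one edge; in particular it is not also an
end of the string it touches. -/
theorem tipsLandInInteriors (h : IsStringContactRep G Ψ) [Finite V]
    (hcard : 2 * Nat.card V ≤ Nat.card G.edgeSet) : TipsLandInInteriors Ψ := by
  choose g hg using fun e : G.edgeSet => h.exists_tipTouches e.2
  have hinj : g.Injective := fun e e' hee => Subtype.ext (h.eq_of_tipTouches (hg e) (hee ▸ hg e'))
  have hsurj := (hinj.bijective_of_nat_card_le (by simpa [mul_comm] using hcard)).2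
  intro v b
  obtain ⟨e, he⟩ := hsurj (v, b)
  obtain ⟨w, hwv, hes, hw⟩ := he ▸ hg e
  refine ⟨w, hwv, hw, fun hend => ?_⟩
  obtain ⟨b', hb'⟩ := AAString.mem_endpoints_iff.mp hend
  obtain ⟨e', he'⟩ := hsurj (w, b')
  have hwe : TipTouches Ψ (w, b') e :=
    ⟨v, hwv.symm, hes.trans Sym2.eq_swap, hb' ▸ (Ψ v).tip_mem_carrier b⟩
  have hee : e' = e := Subtype.ext (h.eq_of_tipTouches (he' ▸ hg e') hwe)
  exact hwv (congrArg Prod.fst (he'.symm.trans (hee ▸ he)))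

end IsStringContactRep

lemma fin_three_eq_or_eq_or_eq {i j k : Fin 3} (hij : i ≠ j) (hik : i ≠ k) (hjk : j ≠ k)
    (a : Fin 3) : a = i ∨ a = j ∨ a = k := by
  revert a i j k
  decide

lemma pos_mul_of_pos_mul_of_pos_mul {d x y : ℝ} (hx : 0 < d * x) (hy : 0 < d * y) :
    0 < x * y := by
  have h := mul_pos hx hy
  rw [show d * x * (d * y) = d * d * (x * y) by ring] at h
  exact pos_of_mul_pos_right h (mul_self_nonneg d)

def AAString.IsCorner (S : AAString) (i j : Fin 3) (σ τ : ℝ) : Prop :=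
  ∃ b, AxisSeg (S.mate b) (S.tip b) i ∧ σ * S.tip b i < σ * S.mate b i ∧
    AxisSeg (S.mate !b) (S.tip !b) j ∧ τ * S.tip (!b) j < τ * S.mate (!b) j

lemma AAString.IsCorner.eq_of_isCorner {S : AAString} {i i' j : Fin 3} {σ σ' τ τ' : ℝ}
    (h : S.IsCorner i j σ τ) (h' : S.IsCorner i' j σ' τ') (hij' : i' ≠ j) :
    i = i' ∧ 0 < σ * σ' ∧ 0 < τ * τ' := by
  obtain ⟨b, hi, hσ, hj, hτ⟩ := h
  obtain ⟨b', hi', hσ', hj', hτ'⟩ := h'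
  obtain rfl | rfl : b' = b ∨ b' = !b := by cases b <;> cases b' <;> simp
  · obtain rfl := hi.axis_unique hi'
    exact ⟨rfl, pos_mul_of_pos_mul_of_pos_mul (d := S.mate b' i - S.tip b' i)
      (by linarith) (by linarith), pos_mul_of_pos_mul_of_pos_mul
      (d := S.mate (!b') j - S.tip (!b') j) (by linarith) (by linarith)⟩
  · exact absurd (hi'.axis_unique hj) hij'

section Sweep

variable {ι : Type*} {Ψ : ι → AAString} {i j k : Fin 3} {σ τ d : ℝ}

def lexHeight (i j : Fin 3) (σ τ : ℝ) (p : Pt3) : ℝ ×ₗ ℝ := toLex (σ * p i, τ * p j)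

def IsHighest (Ψ : ι → AAString) (i j : Fin 3) (σ τ : ℝ) (t : Pt3) : Prop :=
  ∀ v, ∀ p ∈ range (Ψ v).pts, lexHeight i j σ τ p ≤ lexHeight i j σ τ t

lemma exists_isHighest [Finite ι] [Nonempty ι] (Ψ : ι → AAString) (i j : Fin 3) (σ τ : ℝ) :
    ∃ v, ∃ p ∈ range (Ψ v).pts, IsHighest Ψ i j σ τ p := by
  obtain ⟨p, hp, hmax⟩ := (⋃ v, range (Ψ v).pts).exists_max_image (lexHeight i j σ τ)
    (finite_iUnion fun v => finite_range _)
    (nonempty_iUnion.mpr ⟨Classical.arbitrary ι, (Ψ _).pts 0, 0, rfl⟩)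
  obtain ⟨v, hv⟩ := mem_iUnion.mp hp
  exact ⟨v, p, hv, fun w q hq => hmax q (mem_iUnion.mpr ⟨w, hq⟩)⟩

namespace IsHighest

variable {t p q : Pt3}

lemma of_apply_eq (ht : IsHighest Ψ i j σ τ t) (hi : p i = t i) (hj : p j = t j) :
    IsHighest Ψ i j σ τ p := by
  simpa only [IsHighest, lexHeight, hi, hj] using ht

lemma mul_lt_or (ht : IsHighest Ψ i j σ τ t) {v : ι} (hp : p ∈ range (Ψ v).pts) :
    σ * p i < σ * t i ∨ σ * p i = σ * t i ∧ τ * p j ≤ τ * t j :=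
  Prod.Lex.toLex_le_toLex.mp (ht v p hp)

lemma mul_lt_fst (ht : IsHighest Ψ i j σ τ t) (hσ : σ ≠ 0) {v : ι} (hp : p ∈ range (Ψ v).pts)
    (htp : AxisSeg t p i) : σ * p i < σ * t i :=
  (ht.mul_lt_or hp).resolve_right fun h => htp.2 (mul_left_cancel₀ hσ h.1).symm

lemma mul_lt_snd (ht : IsHighest Ψ i j σ τ t) (hij : i ≠ j) (hτ : τ ≠ 0) {v : ι}
    (hp : p ∈ range (Ψ v).pts) (htp : AxisSeg t p j) : τ * p j < τ * t j := by
  rcases ht.mul_lt_or hp with h | ⟨-, h⟩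
  · exact absurd (htp.1 i hij) (fun he => h.ne (by rw [he]))
  · exact lt_of_le_of_ne h fun he => htp.2 (mul_left_cancel₀ hτ he).symm

lemma mul_pos_of_axisSeg (ht : IsHighest Ψ i j σ τ t) (hij : i ≠ j) (hσ : σ ≠ 0) (hτ : τ ≠ 0)
    {a : Fin 3} (ha : a = i ∨ a = j) {v w : ι} (hp : p ∈ range (Ψ v).pts)
    (hq : q ∈ range (Ψ w).pts) (htp : AxisSeg t p a) (htq : AxisSeg t q a) :
    0 < (p a - t a) * (q a - t a) := by
  rcases ha with rfl | rfl
  · have h₁ := ht.mul_lt_fst hσ hp htp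
    have h₂ := ht.mul_lt_fst hσ hq htq
    exact pos_mul_of_pos_mul_of_pos_mul (d := -σ) (by linarith) (by linarith)
  · have h₁ := ht.mul_lt_snd hij hτ hp htp
    have h₂ := ht.mul_lt_snd hij hτ hq htq
    exact pos_mul_of_pos_mul_of_pos_mul (d := -τ) (by linarith) (by linarith)

lemma isCorner_or_axisSeg_of_bend (ht : IsHighest Ψ i j σ τ t) (hij : i ≠ j) (hik : i ≠ k)
    (hjk : j ≠ k) (hσ : σ ≠ 0) (hτ : τ ≠ 0) {w : ι} (hk : (Ψ w).k = 2)
    (hbend : ∀ b, (Ψ w).mate b = t) :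
    (Ψ w).IsCorner i j σ τ ∨ ∃ b, AxisSeg t ((Ψ w).tip b) k := by
  obtain ⟨a, ha⟩ := (Ψ w).exists_axisSeg_mate_tip true
  obtain ⟨a', ha'⟩ := (Ψ w).exists_axisSeg_mate_tip false
  have hlegs := (Ψ w).legs_inter_finite hk
  simp only [hbend] at ha ha' hlegs
  have hsplit : ∀ c, (c = i ∨ c = j) → AxisSeg t ((Ψ w).tip true) c →
      AxisSeg t ((Ψ w).tip false) c → False := fun c hc h h' =>
    h.inter_infinite h' (ht.mul_pos_of_axisSeg hij hσ hτ hc ((Ψ w).tip_mem_range true)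
      ((Ψ w).tip_mem_range false) h h') hlegs
  have hcorner : ∀ b, AxisSeg t ((Ψ w).tip b) i → AxisSeg t ((Ψ w).tip !b) j →
      (Ψ w).IsCorner i j σ τ := fun b hi hj =>
    ⟨b, hbend b ▸ hi, hbend b ▸ ht.mul_lt_fst hσ ((Ψ w).tip_mem_range b) hi,
      hbend (!b) ▸ hj, hbend (!b) ▸ ht.mul_lt_snd hij hτ ((Ψ w).tip_mem_range !b) hj⟩
  rcases fin_three_eq_or_eq_or_eq hij hik hjk a with rfl | rfl | rfl <;>
    rcases fin_three_eq_or_eq_or_eq hij hik hjk a' with rfl | rfl | rfl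
  all_goals first
    | exact .inr ⟨true, ha⟩
    | exact .inr ⟨false, ha'⟩
    | exact (hsplit _ (by simp) ha ha').elim
    | exact .inl (hcorner true ha ha')
    | exact .inl (hcorner false ha' ha)

lemma isCorner_or_axisSeg_of_mem (ht : IsHighest Ψ i j σ τ t) (hij : i ≠ j) (hik : i ≠ k)
    (hjk : j ≠ k) (hσ : σ ≠ 0) (hτ : τ ≠ 0) {w : ι} (hk : (Ψ w).k ≤ 2)
    (htw : t ∈ (Ψ w).carrier) (hte : t ∉ (Ψ w).endpoints) :
    (Ψ w).IsCorner i j σ τ ∨ ∃ b, AxisSeg ((Ψ w).mate b) ((Ψ w).tip b) k ∧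
      t ∈ segment ℝ ((Ψ w).mate b) ((Ψ w).tip b) ∧ t ≠ (Ψ w).tip b := by
  rcases (Ψ w).eq_bend_or_mem_interior hk htw hte with ⟨hk2, hbend⟩ | ⟨b, htb, htm, htt⟩
  · rcases ht.isCorner_or_axisSeg_of_bend hij hik hjk hσ hτ hk2 hbend with h | ⟨b, hb⟩
    · exact .inl h
    · exact .inr ⟨b, hbend b ▸ hb, hbend b ▸ left_mem_segment ℝ _ _, hb.ne⟩
  obtain ⟨a, ha⟩ := (Ψ w).exists_axisSeg_mate_tip b
  have hopp := ha.mul_neg_of_mem_segment htb htm htt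
  have htm' := ha.of_mem_segment_left htb htm
  rcases fin_three_eq_or_eq_or_eq hij hik hjk a with rfl | rfl | rfl
  · exact absurd (ht.mul_pos_of_axisSeg hij hσ hτ (.inl rfl) ((Ψ w).mate_mem_range b)
      ((Ψ w).tip_mem_range b) htm' (ha.of_mem_segment htb htt)) hopp.not_gt
  · exact absurd (ht.mul_pos_of_axisSeg hij hσ hτ (.inr rfl) ((Ψ w).mate_mem_range b)
      ((Ψ w).tip_mem_range b) htm' (ha.of_mem_segment htb htt)) hopp.not_gt
  · exact .inr ⟨b, ha, htb, htt⟩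

end IsHighest

def IsHighestTip (Ψ : ι → AAString) (i j k : Fin 3) (σ τ d : ℝ) (v : ι) (b : Bool) : Prop :=
  IsHighest Ψ i j σ τ ((Ψ v).tip b) ∧ AxisSeg ((Ψ v).mate b) ((Ψ v).tip b) k ∧
    0 < d * ((Ψ v).tip b k - (Ψ v).mate b k)

lemma exists_isHighestTip [Finite ι] [Nonempty ι] (hk : ∀ v, (Ψ v).k ≤ 2)
    (hland : TipsLandInInteriors Ψ) (hij : i ≠ j) (hik : i ≠ k) (hjk : j ≠ k) (hσ : σ ≠ 0)
    (hτ : τ ≠ 0) : (∃ v, (Ψ v).IsCorner i j σ τ) ∨ ∃ d v b, IsHighestTip Ψ i j k σ τ d v b := by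
  obtain ⟨u, P, hPu, hP⟩ := exists_isHighest Ψ i j σ τ
  obtain ⟨w, hPw, hPe⟩ : ∃ w, P ∈ (Ψ w).carrier ∧ P ∉ (Ψ w).endpoints := by
    by_cases hPe : P ∈ (Ψ u).endpoints
    · obtain ⟨b, rfl⟩ := AAString.mem_endpoints_iff.mp hPe
      obtain ⟨w, -, hw, hwe⟩ := hland u b
      exact ⟨w, hw, hwe⟩
    · refine ⟨u, ?_, hPe⟩
      rcases (Ψ u).tip_or_bend_of_mem_range (hk u) hPu with h | ⟨-, hbend⟩
      · exact absurd (AAString.mem_endpoints_iff.mpr h) hPe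
      · exact hbend true ▸ (Ψ u).segment_mate_tip_subset true (left_mem_segment ℝ _ _)
  rcases hP.isCorner_or_axisSeg_of_mem hij hik hjk hσ hτ (hk w) hPw hPe with h | ⟨b, hb, hPb, -⟩
  · exact .inl ⟨w, h⟩
  · exact .inr ⟨_, w, b, hP.of_apply_eq (hb.apply_eq_of_mem hPb hik).symm
      (hb.apply_eq_of_mem hPb hjk).symm, hb, mul_self_pos.mpr (sub_ne_zero.mpr hb.2.symm)⟩

lemma IsHighestTip.exists_further {v : ι} {b : Bool} (h : IsHighestTip Ψ i j k σ τ d v b)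
    (hk : ∀ v, (Ψ v).k ≤ 2) (hland : TipsLandInInteriors Ψ)
    (hfin : Pairwise fun u w => ((Ψ u).carrier ∩ (Ψ w).carrier).Finite) (hij : i ≠ j)
    (hik : i ≠ k) (hjk : j ≠ k) (hσ : σ ≠ 0) (hτ : τ ≠ 0) :
    (∃ w, (Ψ w).IsCorner i j σ τ) ∨
      ∃ w b', IsHighestTip Ψ i j k σ τ d w b' ∧ d * (Ψ v).tip b k < d * (Ψ w).tip b' k := by
  obtain ⟨ht, hax, hd⟩ := h
  obtain ⟨w, hwv, htw, hte⟩ := hland v b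
  set t := (Ψ v).tip b
  have forward : ∀ Q, segment ℝ t Q ⊆ (Ψ w).carrier → AxisSeg t Q k → 0 < d * (Q k - t k) := by
    intro Q hQ htQ
    -- otherwise `[t, Q]` would overlap the last segment of `Ψ v`
    by_contra hle
    have hlt : d * (Q k - t k) < 0 := lt_of_le_of_ne (not_lt.mp hle)
      (mul_ne_zero (left_ne_zero_of_mul hd.ne') (sub_ne_zero.mpr htQ.2.symm))
    refine hax.symm.inter_infinite htQ
      (pos_mul_of_pos_mul_of_pos_mul (d := -d) (by linarith) (by linarith)) ?_
    refine (hfin hwv.symm).subset (inter_subset_inter ?_ hQ)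
    rw [segment_symm]
    exact (Ψ v).segment_mate_tip_subset b
  rcases ht.isCorner_or_axisSeg_of_mem hij hik hjk hσ hτ (hk w) htw hte with
    hc | ⟨b', hb', htb', htt'⟩
  · exact .inl ⟨w, hc⟩
  have hsub := (Ψ w).segment_mate_tip_subset b'
  have htip := forward _
    (((convex_segment _ _).segment_subset htb' (right_mem_segment ℝ _ _)).trans hsub)
    (hb'.of_mem_segment htb' htt')
  have hmate : t = (Ψ w).mate b' := by
    by_contra htm
    have hmate := forward _
      (((convex_segment _ _).segment_subset htb' (left_mem_segment ℝ _ _)).trans hsub)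
      (hb'.of_mem_segment_left htb' htm)
    exact (hb'.mul_neg_of_mem_segment htb' htm htt').not_gt
      (pos_mul_of_pos_mul_of_pos_mul hmate htip)
  refine .inr ⟨w, b', ⟨ht.of_apply_eq (hb'.apply_eq_of_mem htb' hik).symm
    (hb'.apply_eq_of_mem htb' hjk).symm, hb', hmate ▸ htip⟩, ?_⟩
  linarith [mul_sub d ((Ψ w).tip b' k) (t k)]

/-- Since the tips pointing in the direction `d eₖ` along the top line are finitely many, the
one furthest along cannot have a successor. -/
theorem exists_isCorner [Finite ι] [Nonempty ι] (hk : ∀ v, (Ψ v).k ≤ 2)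
    (hland : TipsLandInInteriors Ψ)
    (hfin : Pairwise fun u w => ((Ψ u).carrier ∩ (Ψ w).carrier).Finite) (hij : i ≠ j)
    (hσ : σ ≠ 0) (hτ : τ ≠ 0) : ∃ v, (Ψ v).IsCorner i j σ τ := by
  obtain ⟨k, hik, hjk⟩ : ∃ k, i ≠ k ∧ j ≠ k := by
    revert i j
    decide
  by_contra hnc
  obtain ⟨d, v₀, b₀, h₀⟩ := (exists_isHighestTip hk hland hij hik hjk hσ hτ).resolve_left hnc
  obtain ⟨⟨v, b⟩, hvb, hmax⟩ := Set.exists_max_image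
    {s : ι × Bool | IsHighestTip Ψ i j k σ τ d s.1 s.2} (fun s => d * (Ψ s.1).tip s.2 k)
    (toFinite _) ⟨(v₀, b₀), h₀⟩
  obtain ⟨w, b', hw, hlt⟩ :=
    (hvb.exists_further hk hland hfin hij hik hjk hσ hτ).resolve_left hnc
  exact (hmax (w, b') hw).not_gt hlt

end Sweep

lemma eq_of_pos_mul_ite {b b' : Bool} (h : 0 < (if b then (1 : ℝ) else -1) * if b' then 1 else -1) :
    b = b' := by
  revert h
  cases b <;> cases b' <;> norm_num

/-- The complete graph `K₅` admits no string contact representation in ℝ³ in which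
every string is a `B₁`-string (an `L`-shape). -/
theorem K5_no_LContactRep :
    ¬ ∃ Ψ : Fin 5 → AAString, IsStringContactRep (⊤ : SimpleGraph (Fin 5)) Ψ ∧
      ∀ v : Fin 5, (Ψ v).bends ≤ 1 := by
  rintro ⟨Ψ, hrep, hbends⟩
  have hk : ∀ v, (Ψ v).k ≤ 2 := fun v => by
    have := hbends v
    unfold AAString.bends at this
    omega
  have hland := hrep.tipsLandInInteriors (by
    rw [Nat.card_eq_fintype_card, Nat.card_eq_fintype_card, SimpleGraph.card_edgeSet,
      SimpleGraph.card_edgeFinset_top_eq_card_choose_two]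
    decide)
  choose c hc using fun T : Fin 2 × Bool × Bool =>
    exists_isCorner hk hland hrep.pairwise_finite_inter (i := T.1.castSucc) (j := 2)
      (σ := if T.2.1 then 1 else -1) (τ := if T.2.2 then 1 else -1)
      (Fin.castSucc_lt_last _).ne (by split_ifs <;> norm_num) (by split_ifs <;> norm_num)
  have hinj : c.Injective := by
    rintro ⟨a, s, t⟩ ⟨a', s', t'⟩ hcc
    have h' := hc (a', s', t')
    rw [← hcc] at h'
    obtain ⟨ha, hs, ht⟩ := (hc (a, s, t)).eq_of_isCorner h' (Fin.castSucc_lt_last _).ne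
    dsimp only at ha hs ht
    rw [Fin.castSucc_inj.mp ha, eq_of_pos_mul_ite hs, eq_of_pos_mul_ite ht]
  simpa using Fintype.card_le_of_injective c hinj
end

section
/- The complete bipartite graph K₃,₃ admits no string contact representation in ℝ³ in which every string is a B₀-string, i.e., a single axis-parallel line segment. -/
open Set

/-! ### Helper lemmas about `Fin 3` and reals -/

lemma fin3_third (i j : Fin 3) (h : i ≠ j) : ∃ k : Fin 3, k ≠ i ∧ k ≠ j := by
  revert h; revert i j; decide

lemma fin3_cover (i j k l : Fin 3) (hij : i ≠ j) (hki : k ≠ i) (hkj : k ≠ j) :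
    l = i ∨ l = j ∨ l = k := by
  revert hij hki hkj; revert i j k l; decide

lemma real_seg_bounds {a b x : ℝ} (h : x ∈ segment ℝ a b) :
    min a b ≤ x ∧ x ≤ max a b := by
  rw [segment_eq_uIcc] at h
  rcases Set.mem_uIcc.mp h with ⟨h1, h2⟩ | ⟨h1, h2⟩ <;>
    constructor <;> simp [min_le_iff, le_max_iff] <;> first | left; linarith | right; linarith

lemma real_mem_seg {a b x : ℝ} (h1 : min a b ≤ x) (h2 : x ≤ max a b) :
    x ∈ segment ℝ a b := by
  rw [segment_eq_uIcc]
  rcases le_total a b with h | h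
  · rw [min_eq_left h] at h1; rw [max_eq_right h] at h2
    exact Set.mem_uIcc.mpr (Or.inl ⟨h1, h2⟩)
  · rw [min_eq_right h] at h1; rw [max_eq_left h] at h2
    exact Set.mem_uIcc.mpr (Or.inr ⟨h1, h2⟩)

/-- a point strictly between two points of a real segment is not an endpoint -/
lemma real_middle_not_end {a b c e : ℝ} (h1 : a < b) (h2 : b < c)
    (ha : a ∈ segment ℝ b e) (hc : c ∈ segment ℝ b e) : False := by
  obtain ⟨ha1, ha2⟩ := real_seg_bounds ha
  obtain ⟨hc1, hc2⟩ := real_seg_bounds hc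
  rcases le_total b e with h | h
  · rw [min_eq_left h] at ha1; linarith
  · rw [max_eq_left h] at hc2; linarith

/-! ### Axis-parallel segments -/

structure Seg where
  A : Pt3
  B : Pt3
  d : Fin 3
  ax : ∀ j, j ≠ d → A j = B j
  nd : A d ≠ B d

def Seg.S (s : Seg) : Set Pt3 := segment ℝ s.A s.B

lemma Seg.mem_iff (s : Seg) (p : Pt3) :
    p ∈ s.S ↔ (∀ j, j ≠ s.d → p j = s.A j) ∧ p s.d ∈ segment ℝ (s.A s.d) (s.B s.d) := by
  constructor
  · rintro ⟨a, b, ha, hb, hab, rfl⟩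
    constructor
    · intro j hj
      have : (a • s.A + b • s.B) j = a * s.A j + b * s.B j := by simp
      rw [this, ← s.ax j hj]
      linear_combination hab * s.A j
    · refine ⟨a, b, ha, hb, hab, ?_⟩
      simp
  · rintro ⟨hc, a, b, ha, hb, hab, hd⟩
    refine ⟨a, b, ha, hb, hab, ?_⟩
    funext j
    by_cases hj : j = s.d
    · subst hj; simpa using hd
    · have : (a • s.A + b • s.B) j = a * s.A j + b * s.B j := by simp
      rw [this, ← s.ax j hj, hc j hj]
      linear_combination hab * s.A j

/-! ### Configurations: a putative B₀ contact representation of K₃,₃ -/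

structure Cfg where
  L : Fin 3 → Seg
  R : Fin 3 → Seg
  touch : ∀ a b, ((L a).S ∩ (R b).S).Nonempty
  sameL : ∀ a b, a ≠ b → (L a).S ∩ (L b).S = ∅
  sameR : ∀ a b, a ≠ b → (R a).S ∩ (R b).S = ∅
  endpt : ∀ a b p, p ∈ (L a).S → p ∈ (R b).S →
    p = (L a).A ∨ p = (L a).B ∨ p = (R b).A ∨ p = (R b).B
  tripleLLR : ∀ a a' b, a ≠ a' → ∀ p, ¬(p ∈ (L a).S ∧ p ∈ (L a').S ∧ p ∈ (R b).S)
  tripleLRR : ∀ a b b', b ≠ b' → ∀ p, ¬(p ∈ (L a).S ∧ p ∈ (R b).S ∧ p ∈ (R b').S)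

def Cfg.swap (C : Cfg) : Cfg where
  L := C.R
  R := C.L
  touch := fun a b => by
    obtain ⟨p, h1, h2⟩ := C.touch b a; exact ⟨p, h2, h1⟩
  sameL := C.sameR
  sameR := C.sameL
  endpt := fun a b p h1 h2 => by
    rcases C.endpt b a p h2 h1 with h | h | h | h <;> tauto
  tripleLLR := fun a a' b hne p h => C.tripleLRR b a a' hne p ⟨h.2.2, h.1, h.2.1⟩
  tripleLRR := fun a b b' hne p h => C.tripleLLR b b' a hne p ⟨h.2.1, h.2.2, h.1⟩

/-- two segments with the same direction that touch lie on the same line -/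
lemma same_dir_same_line {s t : Seg} {p : Pt3} (hd : s.d = t.d)
    (hs : p ∈ s.S) (ht : p ∈ t.S) : ∀ j, j ≠ s.d → s.A j = t.A j := by
  intro j hj
  rw [← ((s.mem_iff p).mp hs).1 j hj, ((t.mem_iff p).mp ht).1 j (hd ▸ hj)]

/-- sorting three pairwise disjoint nondegenerate closed intervals -/
lemma sort3 (lo hi : Fin 3 → ℝ) (hle : ∀ m, lo m ≤ hi m)
    (hdisj : ∀ m m', m ≠ m' → hi m < lo m' ∨ hi m' < lo m) :
    ∃ m1 m2 m3 : Fin 3, m1 ≠ m2 ∧ m1 ≠ m3 ∧ m2 ≠ m3 ∧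
      hi m1 < lo m2 ∧ hi m2 < lo m3 := by
  have h01 := hdisj 0 1 (by decide)
  have h02 := hdisj 0 2 (by decide)
  have h12 := hdisj 1 2 (by decide)
  have l0 := hle 0; have l1 := hle 1; have l2 := hle 2
  rcases h01 with h01 | h01 <;> rcases h02 with h02 | h02 <;> rcases h12 with h12 | h12
  · exact ⟨0, 1, 2, by decide, by decide, by decide, h01, h12⟩
  · exact ⟨0, 2, 1, by decide, by decide, by decide, h02, h12⟩
  · exact False.elim (by linarith)
  · exact ⟨2, 0, 1, by decide, by decide, by decide, h02, h01⟩
  · exact ⟨1, 0, 2, by decide, by decide, by decide, h01, h02⟩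
  · exact False.elim (by linarith)
  · exact ⟨1, 2, 0, by decide, by decide, by decide, h12, h02⟩
  · exact ⟨2, 1, 0, by decide, by decide, by decide, h12, h01⟩

/-- among three pairwise distinct reals indexed by `Fin 3` there is a strict middle -/
lemma middle3 (β : Fin 3 → ℝ) (hinj : ∀ m m', m ≠ m' → β m ≠ β m') :
    ∃ n0 n1 n2 : Fin 3, n1 ≠ n0 ∧ n2 ≠ n0 ∧ n1 ≠ n2 ∧
      β n1 < β n0 ∧ β n0 < β n2 := by
  rcases lt_or_gt_of_ne (hinj 0 1 (by decide)) with h01 | h01 <;>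
    rcases lt_or_gt_of_ne (hinj 0 2 (by decide)) with h02 | h02 <;>
      rcases lt_or_gt_of_ne (hinj 1 2 (by decide)) with h12 | h12
  · exact ⟨1, 0, 2, by decide, by decide, by decide, h01, h12⟩
  · exact ⟨2, 0, 1, by decide, by decide, by decide, h02, h12⟩
  · exact False.elim (by linarith)
  · exact ⟨0, 2, 1, by decide, by decide, by decide, h02, h01⟩
  · exact ⟨0, 1, 2, by decide, by decide, by decide, h01, h02⟩
  · exact False.elim (by linarith)
  · exact ⟨2, 1, 0, by decide, by decide, by decide, h12, h02⟩
  · exact ⟨1, 2, 0, by decide, by decide, by decide, h12, h01⟩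

lemma Seg.coord_eq (s : Seg) {p : Pt3} (h : p ∈ s.S) {j : Fin 3} (hj : j ≠ s.d) :
    p j = s.A j := ((s.mem_iff p).mp h).1 j hj

lemma Seg.coord_lb (s : Seg) {p : Pt3} (h : p ∈ s.S) :
    min (s.A s.d) (s.B s.d) ≤ p s.d := (real_seg_bounds ((s.mem_iff p).mp h).2).1

lemma Seg.coord_ub (s : Seg) {p : Pt3} (h : p ∈ s.S) :
    p s.d ≤ max (s.A s.d) (s.B s.d) := (real_seg_bounds ((s.mem_iff p).mp h).2).2

lemma Seg.mem_of (s : Seg) {i : Fin 3} (hd : s.d = i) (p : Pt3)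
    (h1 : ∀ j, j ≠ i → p j = s.A j) (h2 : min (s.A i) (s.B i) ≤ p i)
    (h3 : p i ≤ max (s.A i) (s.B i)) : p ∈ s.S := by
  subst hd; exact (s.mem_iff p).mpr ⟨h1, real_mem_seg h2 h3⟩

lemma Seg.lo_lt_hi (s : Seg) {i : Fin 3} (hd : s.d = i) :
    min (s.A i) (s.B i) < max (s.A i) (s.B i) := by
  subst hd; exact min_lt_max.mpr s.nd

/-- Two of the three right segments lying on one common line is impossible. -/
lemma Cfg.no_same_line (C : Cfg) (b1 b2 : Fin 3) (hne : b1 ≠ b2)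
    (hd : (C.R b2).d = (C.R b1).d)
    (hline : ∀ j, j ≠ (C.R b1).d → (C.R b1).A j = (C.R b2).A j) : False := by
  set i := (C.R b1).d with hi
  -- Step 1: every left segment has direction i and lies on the same line
  have hL : ∀ a, (C.L a).d = i ∧ ∀ j, j ≠ i → (C.L a).A j = (C.R b1).A j := by
    intro a
    obtain ⟨p1, hp1u, hp1v⟩ := C.touch a b1
    obtain ⟨p2, hp2u, hp2v⟩ := C.touch a b2
    have hp12 : p1 ≠ p2 := by
      rintro rfl; exact C.tripleLRR a b1 b2 hne p1 ⟨hp1u, hp1v, hp2v⟩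
    have hagree : ∀ j, j ≠ i → p1 j = p2 j := fun j hj => by
      rw [(C.R b1).coord_eq hp1v hj, hline j hj,
        ← (C.R b2).coord_eq hp2v (by rw [hd]; exact hj)]
    have hdL : (C.L a).d = i := by
      by_contra hda
      apply hp12
      funext j
      by_cases hj : j = i
      · subst hj
        rw [(C.L a).coord_eq hp1u (fun h => hda h.symm),
          ← (C.L a).coord_eq hp2u (fun h => hda h.symm)]
      · exact hagree j hj
    refine ⟨hdL, fun j hj => ?_⟩
    rw [← (C.L a).coord_eq hp1u (by rw [hdL]; exact hj), (C.R b1).coord_eq hp1v hj]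
  -- Step 2: interval data for the left segments
  set lo : Fin 3 → ℝ := fun m => min ((C.L m).A i) ((C.L m).B i) with hlo
  set hi' : Fin 3 → ℝ := fun m => max ((C.L m).A i) ((C.L m).B i) with hhi
  have hle : ∀ m, lo m ≤ hi' m := fun m => min_le_max
  have hdisj : ∀ m m', m ≠ m' → hi' m < lo m' ∨ hi' m' < lo m := by
    intro m m' hmm'
    by_contra hcon
    push_neg at hcon
    obtain ⟨h1, h2⟩ := hcon
    set x := max (lo m) (lo m') with hx
    set q : Pt3 := fun j => if j = i then x else (C.R b1).A j with hq
    have hqi : q i = x := by simp [hq]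
    have hqj : ∀ j, j ≠ i → q j = (C.R b1).A j := fun j hj => by simp [hq, hj]
    have hqm : ∀ m'' : Fin 3, lo m'' ≤ x → x ≤ hi' m'' → q ∈ (C.L m'').S := by
      intro m'' ha hb
      refine (C.L m'').mem_of (hL m'').1 q (fun j hj => ?_) (by rw [hqi]; exact ha)
        (by rw [hqi]; exact hb)
      rw [hqj j hj, (hL m'').2 j hj]
    have hmem1 : q ∈ (C.L m).S := hqm m (le_max_left _ _) (max_le (hle m) h1)
    have hmem2 : q ∈ (C.L m').S := hqm m' (le_max_right _ _) (max_le h2 (hle m'))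
    have := C.sameL m m' hmm'
    rw [Set.eq_empty_iff_forall_notMem] at this
    exact this q ⟨hmem1, hmem2⟩
  obtain ⟨m1, m2, m3, h12, h13, h23, hA, hB⟩ := sort3 lo hi' hle hdisj
  -- Step 3: the middle left segment is contained in the right segment b1
  obtain ⟨p1, hp1u, hp1v⟩ := C.touch m1 b1
  obtain ⟨p3, hp3u, hp3v⟩ := C.touch m3 b1
  have hp1a : p1 i ≤ hi' m1 := by
    have := (C.L m1).coord_ub hp1u; rwa [(hL m1).1] at this
  have hp3a : lo m3 ≤ p3 i := by
    have := (C.L m3).coord_lb hp3u; rwa [(hL m3).1] at this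
  have hp1b : min ((C.R b1).A i) ((C.R b1).B i) ≤ p1 i := (C.R b1).coord_lb hp1v
  have hp3b : p3 i ≤ max ((C.R b1).A i) ((C.R b1).B i) := (C.R b1).coord_ub hp3v
  set F : Set ℝ := {(C.L m2).A i, (C.L m2).B i, (C.R b1).A i, (C.R b1).B i} with hF
  have hsub : Set.Icc (lo m2) (hi' m2) ⊆ F := by
    intro x hx
    obtain ⟨hx1, hx2⟩ := hx
    set q : Pt3 := fun j => if j = i then x else (C.R b1).A j with hq
    have hqi : q i = x := by simp [hq]
    have hqj : ∀ j, j ≠ i → q j = (C.R b1).A j := fun j hj => by simp [hq, hj]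
    have hmem2 : q ∈ (C.L m2).S := by
      refine (C.L m2).mem_of (hL m2).1 q (fun j hj => ?_) (by rw [hqi]; exact hx1)
        (by rw [hqi]; exact hx2)
      rw [hqj j hj, (hL m2).2 j hj]
    have hmemb : q ∈ (C.R b1).S := by
      refine (C.R b1).mem_of rfl q hqj (by rw [hqi]; linarith) (by rw [hqi]; linarith)
    rcases C.endpt m2 b1 q hmem2 hmemb with h | h | h | h <;>
      rw [← hqi, h] <;> simp [hF]
  exact (Set.Icc_infinite ((C.L m2).lo_lt_hi (hL m2).1)).mono hsub (Set.toFinite F)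

/-- No two right segments have the same direction. -/
lemma Cfg.dir_inj (C : Cfg) (b1 b2 : Fin 3) (hne : b1 ≠ b2)
    (hdd : (C.R b1).d = (C.R b2).d) : False := by
  -- Step 1: every left segment has direction different from i := (R b1).d
  have hstep1 : ∀ a, (C.L a).d ≠ (C.R b1).d := by
    intro a hda
    obtain ⟨p1, h1u, h1v⟩ := C.touch a b1
    obtain ⟨p2, h2u, h2v⟩ := C.touch a b2
    refine C.no_same_line b1 b2 hne hdd.symm (fun j hj => ?_)
    rw [← same_dir_same_line hda h1u h1v j (by rw [hda]; exact hj),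
      same_dir_same_line (hda.trans hdd) h2u h2v j (by rw [hda]; exact hj)]
  -- Step 2: b1 and b2 are not on a common line; they differ at some coordinate j0 ≠ i
  have hnl : ¬ ∀ j, j ≠ (C.R b1).d → (C.R b1).A j = (C.R b2).A j :=
    fun h => C.no_same_line b1 b2 hne hdd.symm h
  push_neg at hnl
  obtain ⟨j0, hj0i, hj0ne⟩ := hnl
  obtain ⟨k0, hk0j, hk0i⟩ := fin3_third j0 (C.R b1).d hj0i
  -- Step 3: every left segment has direction j0 and k0-coordinate that of b1
  have hLa : ∀ a, (C.L a).d = j0 ∧ (C.L a).A k0 = (C.R b1).A k0 := by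
    intro a
    have hja := hstep1 a
    obtain ⟨p1, h1u, h1v⟩ := C.touch a b1
    obtain ⟨p2, h2u, h2v⟩ := C.touch a b2
    obtain ⟨k, hki, hkj⟩ := fin3_third (C.R b1).d (C.L a).d (Ne.symm hja)
    have e1 : (C.L a).A k = (C.R b1).A k := by
      rw [← (C.L a).coord_eq h1u hkj, (C.R b1).coord_eq h1v hki]
    have e2 : (C.L a).A k = (C.R b2).A k := by
      rw [← (C.L a).coord_eq h2u hkj, (C.R b2).coord_eq h2v (by rw [← hdd]; exact hki)]
    have hkj0 : k ≠ j0 := by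
      rintro rfl; exact hj0ne (e1.symm.trans e2)
    have hcov := fin3_cover (C.R b1).d (C.L a).d k j0 (Ne.symm hja) hki hkj
    have hdLa : (C.L a).d = j0 := by
      rcases hcov with h | h | h
      · exact absurd h hj0i
      · exact h.symm
      · exact absurd h.symm hkj0
    refine ⟨hdLa, ?_⟩
    rw [← (C.L a).coord_eq h1u (by rw [hdLa]; exact hk0j),
      (C.R b1).coord_eq h1v hk0i]
  -- Step 4: the i-coordinates of the left segments are pairwise distinct
  have hα : ∀ a a', a ≠ a' → (C.L a).A (C.R b1).d ≠ (C.L a').A (C.R b1).d := by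
    intro a a' haa' heq
    refine C.swap.no_same_line a a' haa' ((hLa a').1.trans (hLa a).1.symm) (fun j hj => ?_)
    show (C.L a).A j = (C.L a').A j
    have hj' : j ≠ j0 := by rw [← (hLa a).1]; exact hj
    rcases fin3_cover j0 (C.R b1).d k0 j hj0i hk0j hk0i with h | h | h
    · exact absurd h hj'
    · rw [h]; exact heq
    · rw [h, (hLa a).2, (hLa a').2]
  -- Step 5: every right segment has direction i and k0-coordinate that of b1
  have hRb : ∀ b, (C.R b).d = (C.R b1).d ∧ (C.R b).A k0 = (C.R b1).A k0 := by
    intro b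
    obtain ⟨q0, h0u, h0v⟩ := C.touch 0 b
    obtain ⟨q1, h1u, h1v⟩ := C.touch 1 b
    have hdb : (C.R b).d = (C.R b1).d := by
      rcases fin3_cover j0 (C.R b1).d k0 (C.R b).d hj0i hk0j hk0i with h | h | h
      · -- direction j0 : same as the lefts, contradiction via i-coordinates
        exfalso
        apply hα 0 1 (by decide)
        rw [same_dir_same_line ((hLa 0).1.trans h.symm) h0u h0v _
            (by rw [(hLa 0).1]; exact Ne.symm hj0i),
          ← same_dir_same_line ((hLa 1).1.trans h.symm) h1u h1v _
            (by rw [(hLa 1).1]; exact Ne.symm hj0i)]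
      · exact h
      · -- direction k0 : i-coordinates of lefts all equal, contradiction
        exfalso
        apply hα 0 1 (by decide)
        rw [← (C.L 0).coord_eq h0u (by rw [(hLa 0).1]; exact Ne.symm hj0i),
          (C.R b).coord_eq h0v (by rw [h]; exact Ne.symm hk0i),
          ← (C.R b).coord_eq h1v (by rw [h]; exact Ne.symm hk0i),
          (C.L 1).coord_eq h1u (by rw [(hLa 1).1]; exact Ne.symm hj0i)]
    refine ⟨hdb, ?_⟩
    rw [← (C.R b).coord_eq h0v (by rw [hdb]; exact hk0i),
      (C.L 0).coord_eq h0u (by rw [(hLa 0).1]; exact hk0j), (hLa 0).2]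
  -- Step 6: the j0-coordinates of the right segments are pairwise distinct
  have hβ : ∀ b b', b ≠ b' → (C.R b).A j0 ≠ (C.R b').A j0 := by
    intro b b' hbb' heq
    refine C.no_same_line b b' hbb' ((hRb b').1.trans (hRb b).1.symm) (fun j hj => ?_)
    have hj' : j ≠ (C.R b1).d := by rw [← (hRb b).1]; exact hj
    rcases fin3_cover (C.R b1).d j0 k0 j (Ne.symm hj0i) hk0i hk0j with h | h | h
    · exact absurd h hj'
    · rw [h]; exact heq
    · rw [h, (hRb b).2, (hRb b').2]
  -- Step 7: the contact points and their coordinates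
  choose p hpL hpR using C.touch
  have hpi : ∀ a b, p a b (C.R b1).d = (C.L a).A (C.R b1).d := fun a b =>
    (C.L a).coord_eq (hpL a b) (by rw [(hLa a).1]; exact Ne.symm hj0i)
  have hpj : ∀ a b, p a b j0 = (C.R b).A j0 := fun a b =>
    (C.R b).coord_eq (hpR a b) (by rw [(hRb b).1]; exact hj0i)
  -- Step 8: the middle right segment has three distinct endpoints, contradiction
  obtain ⟨n0, n1, n2, _, _, _, hm1, hm2⟩ := middle3 (fun b => (C.R b).A j0) hβ
  have hend : ∀ a, p a n0 = (C.R n0).A ∨ p a n0 = (C.R n0).B := by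
    intro a
    have hseg : ∀ n, p a n j0 ∈ segment ℝ ((C.L a).A j0) ((C.L a).B j0) := by
      intro n
      have := (((C.L a).mem_iff (p a n)).mp (hpL a n)).2
      rwa [(hLa a).1] at this
    have h1 : (C.R n1).A j0 ∈ segment ℝ ((C.L a).A j0) ((C.L a).B j0) := by
      rw [← hpj a n1]; exact hseg n1
    have h2 : (C.R n2).A j0 ∈ segment ℝ ((C.L a).A j0) ((C.L a).B j0) := by
      rw [← hpj a n2]; exact hseg n2
    rcases C.endpt a n0 (p a n0) (hpL a n0) (hpR a n0) with h | h | h | h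
    · -- p a n0 = (L a).A : middle value is an endpoint of the segment, impossible
      exfalso
      have : (C.L a).A j0 = (C.R n0).A j0 := by rw [← h, hpj a n0]
      rw [this] at h1 h2
      exact real_middle_not_end hm1 hm2 h1 h2
    · exfalso
      have : (C.L a).B j0 = (C.R n0).A j0 := by rw [← h, hpj a n0]
      rw [segment_symm] at h1 h2
      rw [this] at h1 h2
      exact real_middle_not_end hm1 hm2 h1 h2
    · exact Or.inl h
    · exact Or.inr h
  have key : ∀ a a', a ≠ a' → p a n0 ≠ p a' n0 := by
    intro a a' haa' heq
    exact hα a a' haa' (by rw [← hpi a n0, ← hpi a' n0, heq])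
  rcases hend 0 with h0 | h0 <;> rcases hend 1 with h1 | h1 <;> rcases hend 2 with h2 | h2
  · exact key 0 1 (by decide) (h0.trans h1.symm)
  · exact key 0 1 (by decide) (h0.trans h1.symm)
  · exact key 0 2 (by decide) (h0.trans h2.symm)
  · exact key 1 2 (by decide) (h1.trans h2.symm)
  · exact key 1 2 (by decide) (h1.trans h2.symm)
  · exact key 0 2 (by decide) (h0.trans h2.symm)
  · exact key 0 1 (by decide) (h0.trans h1.symm)
  · exact key 0 1 (by decide) (h0.trans h1.symm)

/-- No configuration exists: the heart of the theorem. -/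
lemma Cfg.false (C : Cfg) : False := by
  have hRinj : Function.Injective (fun b => (C.R b).d) := by
    intro b b' h
    by_contra hne
    exact C.dir_inj b b' hne h
  have hRsurj : Function.Surjective (fun b => (C.R b).d) :=
    Finite.surjective_of_injective hRinj
  have hi12 : (C.L 0).d ≠ (C.L 1).d := by
    intro h
    exact C.swap.dir_inj 0 1 (by decide) h
  obtain ⟨b1, hb1⟩ := hRsurj (C.L 0).d
  obtain ⟨b2, hb2⟩ := hRsurj (C.L 1).d
  simp only at hb1 hb2
  have hb12 : b1 ≠ b2 := by
    rintro rfl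
    exact hi12 (hb1.symm.trans hb2)
  obtain ⟨q1, hq1u, hq1v⟩ := C.touch 0 b1
  have hline1 : ∀ j, j ≠ (C.L 0).d → (C.L 0).A j = (C.R b1).A j := fun j hj =>
    same_dir_same_line hb1.symm hq1u hq1v j hj
  obtain ⟨q2, hq2u, hq2v⟩ := C.touch 1 b2
  have hline2 : ∀ j, j ≠ (C.L 1).d → (C.L 1).A j = (C.R b2).A j := fun j hj =>
    same_dir_same_line hb2.symm hq2u hq2v j hj
  obtain ⟨c1, hc1u, hc1v⟩ := C.touch 0 b2
  obtain ⟨c2, hc2u, hc2v⟩ := C.touch 1 b1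
  have hkey : c1 = c2 := by
    funext j
    by_cases h1 : j = (C.L 0).d
    · subst h1
      rw [(C.R b2).coord_eq hc1v (by rw [hb2]; exact hi12),
        ← hline2 _ hi12, (C.L 1).coord_eq hc2u hi12]
    · by_cases h2 : j = (C.L 1).d
      · subst h2
        rw [(C.L 0).coord_eq hc1u (Ne.symm hi12),
          (C.R b1).coord_eq hc2v (by rw [hb1]; exact Ne.symm hi12),
          ← hline1 _ (Ne.symm hi12)]
      · rw [(C.L 0).coord_eq hc1u h1, (C.R b1).coord_eq hc2v (by rw [hb1]; exact h1),
          ← hline1 _ h1]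
  exact C.tripleLLR 0 1 b2 (by decide) c1 ⟨hc1u, by rw [hkey]; exact hc2u, hc1v⟩

/-! ### Extraction: a B₀ `AAString` is a single segment -/

lemma AAString.extract (S : AAString) (h : S.bends = 0) :
    ∃ A B : Pt3, A ≠ B ∧ AxisParallel (B - A) ∧
      S.carrier = segment ℝ A B ∧ S.endpoints = {A, B} := by
  have hk : S.k = 1 := by
    have := S.k_pos
    unfold AAString.bends at h
    omega
  set i0 : Fin S.k := ⟨0, by omega⟩ with hi0
  have hi0v : (i0 : ℕ) = 0 := by rw [hi0]
  have e1 : i0.castSucc = (0 : Fin (S.k + 1)) := by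
    apply Fin.ext; simp [hi0v]
  have e2 : i0.succ = Fin.last S.k := by
    apply Fin.ext; simp [hi0v, hk]
  refine ⟨S.pts i0.castSucc, S.pts i0.succ, S.consec_ne i0, S.axis i0, ?_, ?_⟩
  · unfold AAString.carrier
    apply Set.eq_of_subset_of_subset
    · apply Set.iUnion_subset
      intro i
      have hi : i = i0 := by
        apply Fin.ext
        have := i.isLt
        omega
      rw [hi]
    · exact Set.subset_iUnion
        (fun i : Fin S.k => segment ℝ (S.pts i.castSucc) (S.pts i.succ)) i0
  · unfold AAString.endpoints
    rw [e1, e2]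

/-! ### The main theorem -/

/-- The complete bipartite graph `K₃,₃` admits no string contact representation in ℝ³
in which every string is a `B₀`-string (a single axis-parallel segment). -/
theorem K33_no_segmentContactRep :
    ¬ ∃ Ψ : Fin 3 ⊕ Fin 3 → AAString,
      IsStringContactRep (completeBipartiteGraph (Fin 3) (Fin 3)) Ψ ∧
      ∀ v : Fin 3 ⊕ Fin 3, (Ψ v).bends = 0 := by
  rintro ⟨Ψ, ⟨hend, htriple, hadj⟩, hb⟩
  choose A B hAB hax hcar hendp using fun v => (Ψ v).extract (hb v)
  have hax' : ∀ v, ∃ i : Fin 3, ∀ j, j ≠ i → (B v - A v) j = 0 := hax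
  choose d hd using hax'
  have haxeq : ∀ v j, j ≠ d v → A v j = B v j := by
    intro v j hj
    have := hd v j hj
    rw [Pi.sub_apply] at this
    linarith
  have hnd : ∀ v, A v (d v) ≠ B v (d v) := by
    intro v heq
    apply hAB v
    funext j
    by_cases hj : j = d v
    · subst hj; exact heq
    · exact haxeq v j hj
  have hne : ∀ (a b : Fin 3), (Sum.inl a : Fin 3 ⊕ Fin 3) ≠ Sum.inr b := by simp
  refine Cfg.false
    { L := fun a => ⟨A (Sum.inl a), B (Sum.inl a), d (Sum.inl a),
        haxeq (Sum.inl a), hnd (Sum.inl a)⟩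
      R := fun b => ⟨A (Sum.inr b), B (Sum.inr b), d (Sum.inr b),
        haxeq (Sum.inr b), hnd (Sum.inr b)⟩
      touch := fun a b => ?_
      sameL := fun a b hab => ?_
      sameR := fun a b hab => ?_
      endpt := fun a b p h1 h2 => ?_
      tripleLLR := fun a a' b hne' p hp => ?_
      tripleLRR := fun a b b' hne' p hp => ?_ }
  · have h := (hadj (Sum.inl a) (Sum.inr b) (hne a b)).mpr (by simp)
    rwa [hcar (Sum.inl a), hcar (Sum.inr b)] at h
  · have h := hadj (Sum.inl a) (Sum.inl b) (by simp [hab])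
    have h2 : ¬ ((Ψ (Sum.inl a)).carrier ∩ (Ψ (Sum.inl b)).carrier).Nonempty := by
      rw [h]; simp
    rw [Set.not_nonempty_iff_eq_empty, hcar (Sum.inl a), hcar (Sum.inl b)] at h2
    exact h2
  · have h := hadj (Sum.inr a) (Sum.inr b) (by simp [hab])
    have h2 : ¬ ((Ψ (Sum.inr a)).carrier ∩ (Ψ (Sum.inr b)).carrier).Nonempty := by
      rw [h]; simp
    rw [Set.not_nonempty_iff_eq_empty, hcar (Sum.inr a), hcar (Sum.inr b)] at h2
    exact h2
  · have h := hend (Sum.inl a) (Sum.inr b) (hne a b) p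
      ⟨by rw [hcar]; exact h1, by rw [hcar]; exact h2⟩
    rw [hendp (Sum.inl a), hendp (Sum.inr b)] at h
    simp only [Set.mem_union, Set.mem_insert_iff, Set.mem_singleton_iff] at h
    tauto
  · exact htriple (Sum.inl a) (Sum.inl a') (Sum.inr b) (by simp [hne']) (hne a b)
      (hne a' b) p
      ⟨by rw [hcar]; exact hp.1, by rw [hcar]; exact hp.2.1, by rw [hcar]; exact hp.2.2⟩
  · exact htriple (Sum.inl a) (Sum.inr b) (Sum.inr b') (hne a b) (hne a b')
      (by simp [hne']) p
      ⟨by rw [hcar]; exact hp.1, by rw [hcar]; exact hp.2.1, by rw [hcar]; exact hp.2.2⟩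
end

section
/- Let s₁, s₂, s₃, s₄ be nondegenerate closed axis-parallel line segments in ℝ³ forming a contact representation of a 4-cycle: s_i ∩ s_{i+1} ≠ ∅ for each i (indices modulo 4), s₁ ∩ s₃ = ∅ and s₂ ∩ s₄ = ∅, every point shared by two of the segments is an endpoint of at least one of them, and no point lies on three of the segments. Then there exist an index j ∈ {1,2,3} and a real number c such that every point of s₁ ∪ s₂ ∪ s₃ ∪ s₄ has j-th coordinate equal to c; in particular the four segments lie in a single plane parallel to a coordinate plane. -/
open Set

/-- Any contact representation of a 4-cycle by nondegenerate axis-parallel segments in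
ℝ³ lies in a single plane parallel to a coordinate plane. -/
theorem fourCycle_segment_rep_coplanar (a b : Fin 4 → Pt3)
    (hne : ∀ i : Fin 4, a i ≠ b i)
    (haxis : ∀ i : Fin 4, AxisParallel (b i - a i))
    (S : Fin 4 → Set Pt3)
    (hS : ∀ i : Fin 4, S i = segment ℝ (a i) (b i))
    (htouch : ∀ i : Fin 4, (S i ∩ S (i + 1)).Nonempty)
    (h02 : S 0 ∩ S 2 = ∅) (h13 : S 1 ∩ S 3 = ∅)
    (hcontact : ∀ i j : Fin 4, i ≠ j → ∀ p ∈ S i ∩ S j,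
        p = a i ∨ p = b i ∨ p = a j ∨ p = b j)
    (hthree : ∀ i j l : Fin 4, i ≠ j → i ≠ l → j ≠ l →
        ∀ p : Pt3, ¬ (p ∈ S i ∧ p ∈ S j ∧ p ∈ S l)) :
    ∃ (j : Fin 3) (c : ℝ), ∀ i : Fin 4, ∀ p ∈ S i, p j = c := by

  classical
  simp only [AxisParallel] at haxis
  choose d hd using haxis
  -- constancy of off-axis coordinates along each segment
  have hconst : ∀ i : Fin 4, ∀ p ∈ S i, ∀ j : Fin 3, j ≠ d i → p j = a i j := by
    intro i p hp j hj
    rw [hS i] at hp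
    obtain ⟨s, t, hs, ht, hst, heq⟩ := hp
    have hbj : b i j = a i j := by
      have h0 := hd i j hj
      simpa [Pi.sub_apply, sub_eq_zero] using h0
    have : p j = s * a i j + t * b i j := by
      rw [← heq]; simp [Pi.add_apply, Pi.smul_apply]
    rw [this, hbj, ← add_mul, hst, one_mul]
  -- contact points
  choose p hpi hpi1 using htouch
  -- opposite segments are disjoint
  have hopp : ∀ i : Fin 4, S i ∩ S (i + 2) = ∅ := by
    intro i
    fin_cases i
    · exact h02
    · exact h13
    · rw [Set.inter_comm]; exact h02
    · rw [Set.inter_comm]; exact h13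
  by_cases hfree : ∃ j : Fin 3, ∀ i : Fin 4, d i ≠ j
  · obtain ⟨j, hj⟩ := hfree
    refine ⟨j, a 0 j, ?_⟩
    have e01 : a 1 j = a 0 j := by
      have h1 := hconst 0 (p 0) (hpi 0) j (Ne.symm (hj 0))
      have h2 := hconst 1 (p 0) (by simpa using hpi1 0) j (Ne.symm (hj 1))
      rw [← h1, ← h2]
    have e12 : a 2 j = a 1 j := by
      have h1 := hconst 1 (p 1) (hpi 1) j (Ne.symm (hj 1))
      have h2 := hconst 2 (p 1) (by simpa using hpi1 1) j (Ne.symm (hj 2))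
      rw [← h1, ← h2]
    have e23 : a 3 j = a 2 j := by
      have h1 := hconst 2 (p 2) (hpi 2) j (Ne.symm (hj 2))
      have h2 := hconst 3 (p 2) (by simpa using hpi1 2) j (Ne.symm (hj 3))
      rw [← h1, ← h2]
    intro i q hq
    fin_cases i
    · exact hconst 0 q hq j (Ne.symm (hj 0))
    · rw [hconst 1 q hq j (Ne.symm (hj 1))]; exact e01
    · rw [hconst 2 q hq j (Ne.symm (hj 2))]; rw [e12, e01]
    · rw [hconst 3 q hq j (Ne.symm (hj 3))]; rw [e23, e12, e01]
  · push_neg at hfree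
    exfalso
    have huniq : ∃ u : Fin 4, ∀ i : Fin 4, i ≠ u → d i ≠ d u := by
      have key : ∀ f : Fin 4 → Fin 3, (∀ j, ∃ i, f i = j) →
          ∃ u, ∀ i, i ≠ u → f i ≠ f u := by decide
      exact key d hfree
    obtain ⟨u, hu⟩ := huniq
    -- index facts
    have i1 : ∀ v : Fin 4, v + 1 ≠ v := by decide
    have i2 : ∀ v : Fin 4, v + 2 ≠ v := by decide
    have i3 : ∀ v : Fin 4, v + 3 ≠ v := by decide
    have i4 : ∀ v : Fin 4, v + 3 + 1 = v := by decide
    have i5 : ∀ v : Fin 4, v + 1 + 1 = v + 2 := by decide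
    have i6 : ∀ v : Fin 4, v + 2 + 1 = v + 3 := by decide
    have i7 : ∀ v : Fin 4, v + 1 + 2 = v + 3 := by decide
    -- d at the other three indices differs from d u
    have du1 : d (u + 1) ≠ d u := hu (u + 1) (i1 u)
    have du2 : d (u + 2) ≠ d u := hu (u + 2) (i2 u)
    have du3 : d (u + 3) ≠ d u := hu (u + 3) (i3 u)
    -- membership facts
    have hm1 : p (u + 3) ∈ S u := by have := hpi1 (u + 3); rwa [i4 u] at this
    have hm2 : p (u + 3) ∈ S (u + 3) := hpi (u + 3)
    have hm3 : p u ∈ S u := hpi u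
    have hm4 : p u ∈ S (u + 1) := hpi1 u
    have hm5 : p (u + 1) ∈ S (u + 1) := hpi (u + 1)
    have hm6 : p (u + 1) ∈ S (u + 2) := by have := hpi1 (u + 1); rwa [i5 u] at this
    have hm7 : p (u + 2) ∈ S (u + 2) := hpi (u + 2)
    have hm8 : p (u + 2) ∈ S (u + 3) := by have := hpi1 (u + 2); rwa [i6 u] at this
    -- chain at coordinate d u
    have c12 : a (u + 1) (d u) = a (u + 2) (d u) := by
      rw [← hconst (u + 1) (p (u + 1)) hm5 (d u) (Ne.symm du1),
        hconst (u + 2) (p (u + 1)) hm6 (d u) (Ne.symm du2)]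
    have c23 : a (u + 2) (d u) = a (u + 3) (d u) := by
      rw [← hconst (u + 2) (p (u + 2)) hm7 (d u) (Ne.symm du2),
        hconst (u + 3) (p (u + 2)) hm8 (d u) (Ne.symm du3)]
    -- p (u+3) = p u
    have hpeq : p (u + 3) = p u := by
      funext j
      by_cases hjd : j = d u
      · subst hjd
        rw [hconst (u + 3) (p (u + 3)) hm2 (d u) (Ne.symm du3),
          hconst (u + 1) (p u) hm4 (d u) (Ne.symm du1),
          ← c23, ← c12]
      · rw [hconst u (p (u + 3)) hm1 j hjd, hconst u (p u) hm3 j hjd]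
    -- contradiction with disjointness of S (u+1) and S (u+3)
    have : p u ∈ S (u + 1) ∩ S (u + 3) := ⟨hm4, hpeq ▸ hm2⟩
    have hE := hopp (u + 1)
    rw [i7 u] at hE
    rw [hE] at this
    exact this
end

section
/- If a finite simple graph G admits a string contact representation in ℝ³, then the number of edges of G is at most twice the number of vertices of G. -/
open Set

/-- If a finite simple graph admits a string contact representation in ℝ³, then it has
at most twice as many edges as vertices. -/
theorem stringContactRep_edge_bound {V : Type*} [Fintype V] [DecidableEq V]
    (G : SimpleGraph V) [DecidableRel G.Adj]
    (h : ∃ Ψ : V → AAString, IsStringContactRep G Ψ) :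
    G.edgeFinset.card ≤ 2 * Fintype.card V := by
  classical
  obtain ⟨Ψ, h1, h2, h3⟩ := h
  set ep : V → Bool → Pt3 :=
    fun v b => if b then (Ψ v).pts 0 else (Ψ v).pts (Fin.last (Ψ v).k) with hep
  have claim : ∀ e ∈ G.edgeFinset, ∃ wb : V × Bool,
      wb.1 ∈ e ∧ ∃ x, x ∈ e ∧ x ≠ wb.1 ∧
        ep wb.1 wb.2 ∈ (Ψ wb.1).carrier ∩ (Ψ x).carrier := by
    intro e he
    rw [SimpleGraph.mem_edgeFinset] at he
    induction e using Sym2.ind with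
    | _ u v =>
      rw [SimpleGraph.mem_edgeSet] at he
      have hne : u ≠ v := he.ne
      obtain ⟨p, hp⟩ := (h3 u v hne).2 he
      rcases h1 u v hne p hp with h' | h'
      · rcases h' with h0 | hl
        · refine ⟨(u, true), Sym2.mem_mk_left u v, v, Sym2.mem_mk_right u v, hne.symm, ?_⟩
          simpa [hep, ← h0] using hp
        · refine ⟨(u, false), Sym2.mem_mk_left u v, v, Sym2.mem_mk_right u v, hne.symm, ?_⟩
          simp only [Set.mem_singleton_iff] at hl
          simpa [hep, ← hl] using hp
      · rcases h' with h0 | hl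
        · refine ⟨(v, true), Sym2.mem_mk_right u v, u, Sym2.mem_mk_left u v, hne, ?_⟩
          have := hp
          simp only [Set.mem_inter_iff] at this
          simpa [hep, ← h0] using And.intro this.2 this.1
        · refine ⟨(v, false), Sym2.mem_mk_right u v, u, Sym2.mem_mk_left u v, hne, ?_⟩
          simp only [Set.mem_singleton_iff] at hl
          have := hp
          simp only [Set.mem_inter_iff] at this
          simpa [hep, ← hl] using And.intro this.2 this.1
  choose f hf using claim
  rcases Finset.eq_empty_or_nonempty G.edgeFinset with hE | ⟨e0, he0⟩
  · simp [hE]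
  · have hV : Nonempty V := ⟨(f e0 he0).1⟩
    set g : Sym2 V → V × Bool :=
      fun e => if he : e ∈ G.edgeFinset then f e he else (Classical.arbitrary V, true) with hg
    have hinj : Set.InjOn g G.edgeFinset := by
      intro e1 he1 e2 he2 heq
      rw [Finset.mem_coe] at he1 he2
      rw [hg] at heq
      simp only [dif_pos he1, dif_pos he2] at heq
      obtain ⟨hw1, x1, hx1, hx1w, hp1⟩ := hf e1 he1
      obtain ⟨hw2, x2, hx2, hx2w, hp2⟩ := hf e2 he2
      by_contra hne12
      set w := (f e1 he1).1
      have hweq : (f e2 he2).1 = w := by rw [← heq]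
      have hpe : ep (f e2 he2).1 (f e2 he2).2 = ep w (f e1 he1).2 := by rw [hweq, ← heq]
      rw [hweq] at hw2 hx2w
      rw [hpe] at hp2
      have he1eq : e1 = s(w, x1) := (Sym2.mem_and_mem_iff (Ne.symm hx1w)).1 ⟨hw1, hx1⟩
      have he2eq : e2 = s(w, x2) := (Sym2.mem_and_mem_iff (Ne.symm hx2w)).1 ⟨hw2, hx2⟩
      have hx12 : x1 ≠ x2 := by
        intro hxx
        exact hne12 (by rw [he1eq, he2eq, hxx])
      exact h2 w x1 x2 (Ne.symm hx1w) (Ne.symm hx2w) hx12 (ep w (f e1 he1).2)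
        ⟨hp1.1, hp1.2, hp2.2⟩
    have hmaps : ∀ e ∈ G.edgeFinset, g e ∈ (Finset.univ : Finset (V × Bool)) :=
      fun e _ => Finset.mem_univ _
    have hcard := Finset.card_le_card_of_injOn g hmaps hinj
    simpa [Fintype.card_prod, Fintype.card_bool, mul_comm] using hcard
end

section
/- If a finite simple graph G admits an orientation of its edges in which every vertex has out-degree at most 2, then G admits a string contact representation in ℝ³ of complexity at most 14, i.e., one in which every string is a B₁₄-string. -/
open Set

/-!
Number the vertices `0, …, n - 1`. Vertex `i` becomes a string with a *spine*
`{x = i, z = 0, |y| ≤ n + 1}`; at both ends of the spine a *post* climbs to the private height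
`z = i + 1`, a *rise* runs back in the plane `x = i` to the level `y = i - n` (resp. `y = n - i`),
a *bridge* turns in the `x`-direction to the `x`-coordinate of one of the at most two
out-neighbours of `i` (or to `x = -1`), and a *leg* descends to `z = 0`, ending on that
neighbour's spine. This uses 8 bends.

Two such strings meet only at these feet: the heights `i + 1` and the levels `i - n < 0 < n - i`
of distinct vertices are distinct, and a rise of `i` (at `x = i`, height `i + 1`, with
`y ≤ i - n` or `y ≥ n - i`) could only meet a leg of `m` (at `y = m - n` or `y = n - m`, height
at most `m + 1`) if both `m ≤ i` and `i ≤ m`. Every intersection point thus lies at `x = i` or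
`x = m`, which excludes triple points.
-/

theorem segment_inter_segment_eq_singleton_of_corner {𝕜 ι E : Type*} [Semiring 𝕜]
    [PartialOrder 𝕜] [ZeroLEOneClass 𝕜] [AddCommMonoid E] [Module 𝕜 E] {a b c : ι → E} (j : ι)
    (hab : ∀ k, k ≠ j → a k = b k) (hbc : b j = c j) :
    segment 𝕜 a b ∩ segment 𝕜 b c = {b} := by
  refine subset_antisymm ?_
    (singleton_subset_iff.2 ⟨right_mem_segment _ _ _, left_mem_segment _ _ _⟩)
  rintro p ⟨hpab, hpbc⟩
  rw [mem_singleton_iff]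
  funext k
  by_cases hk : k = j
  · subst hk
    simpa [hbc, segment_same] using Pi.segment_subset b c hpbc k (mem_univ k)
  · simpa [hab k hk, segment_same] using Pi.segment_subset a b hpab k (mem_univ k)

theorem apply_mem_uIcc_of_mem_segment {ι : Type*} {a b p : ι → ℝ} (h : p ∈ segment ℝ a b)
    (j : ι) : p j ∈ uIcc (a j) (b j) := by
  rw [← segment_eq_uIcc]
  exact Pi.segment_subset a b h j (mem_univ j)

theorem vec3_mem_segment_of_mem_segment {x z y y₁ y₂ : ℝ} (hy : y ∈ segment ℝ y₁ y₂) :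
    ![x, y, z] ∈ segment ℝ ![x, y₁, z] ![x, y₂, z] := by
  obtain ⟨s, t, hs, ht, hst, rfl⟩ := hy
  refine ⟨s, t, hs, ht, hst, ?_⟩
  funext j
  fin_cases j <;> simp [← add_mul, hst]

theorem eq_vec3_of_apply_eq {p : Pt3} {x y z : ℝ} (h0 : p 0 = x) (h1 : p 1 = y) (h2 : p 2 = z) :
    p = ![x, y, z] := by
  funext j
  fin_cases j <;> assumption

def gadgetPts (N i x₁ x₂ : ℝ) : Fin 10 → Pt3 :=
  ![![x₁, i - N, 0], ![x₁, i - N, i + 1], ![i, i - N, i + 1], ![i, -(N + 1), i + 1],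
    ![i, -(N + 1), 0], ![i, N + 1, 0], ![i, N + 1, i + 1], ![i, N - i, i + 1],
    ![x₂, N - i, i + 1], ![x₂, N - i, 0]]

def gadget (N i x₁ x₂ : ℝ) (hi : 0 ≤ i) (hiN : i < N) (h₁ : x₁ ≠ i) (h₂ : x₂ ≠ i) :
    AAString where
  k := 9
  pts := gadgetPts N i x₁ x₂
  k_pos := by norm_num
  consec_ne := by
    intro a h
    have h0 := congrFun h 0
    have h1 := congrFun h 1
    have h2 := congrFun h 2
    fin_cases a <;>
      simp only [gadgetPts, Fin.isValue, Matrix.cons_val, Fin.reduceCastSucc, Fin.reduceSucc,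
        Fin.reduceFinMk] at h0 h1 h2 <;>
      first | linarith | exact h₁ h0 | exact h₂ h0.symm
  axis := by
    intro a
    fin_cases a <;>
      first
      | (refine ⟨0, fun j hj => ?_⟩; fin_cases j <;> first | exact sub_self _ | exact absurd rfl hj)
      | (refine ⟨1, fun j hj => ?_⟩; fin_cases j <;> first | exact sub_self _ | exact absurd rfl hj)
      | (refine ⟨2, fun j hj => ?_⟩; fin_cases j <;> first | exact sub_self _ | exact absurd rfl hj)
  simple_consec := by
    intro a b hab
    fin_cases a <;> fin_cases b
    all_goals try exact absurd hab (by decide)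
    all_goals
      first
      | (refine segment_inter_segment_eq_singleton_of_corner 0 (fun k hk => ?_) rfl
         fin_cases k <;> first | rfl | exact absurd rfl hk)
      | (refine segment_inter_segment_eq_singleton_of_corner 1 (fun k hk => ?_) rfl
         fin_cases k <;> first | rfl | exact absurd rfl hk)
      | (refine segment_inter_segment_eq_singleton_of_corner 2 (fun k hk => ?_) rfl
         fin_cases k <;> first | rfl | exact absurd rfl hk)
  simple_far := by
    intro a b hab
    refine eq_empty_of_forall_notMem fun p ⟨hp, hq⟩ => ?_
    have hp0 := apply_mem_uIcc_of_mem_segment hp 0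
    have hp1 := apply_mem_uIcc_of_mem_segment hp 1
    have hp2 := apply_mem_uIcc_of_mem_segment hp 2
    have hq0 := apply_mem_uIcc_of_mem_segment hq 0
    have hq1 := apply_mem_uIcc_of_mem_segment hq 1
    have hq2 := apply_mem_uIcc_of_mem_segment hq 2
    fin_cases a <;> fin_cases b
    all_goals try exact absurd hab (by decide)
    all_goals
      simp only [gadgetPts, Fin.isValue, Matrix.cons_val, Fin.reduceCastSucc, Fin.reduceSucc,
        Fin.reduceFinMk, uIcc_self, mem_singleton_iff, mem_uIcc] at hp0 hp1 hp2 hq0 hq1 hq2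
      casesm* _ ∨ _ <;> first | linarith | exact h₁ (by linarith) | exact h₂ (by linarith)

inductive OnGadget (N i x₁ x₂ : ℝ) (p : Pt3) : Prop
  | spine : p 0 = i → p 2 = 0 → OnGadget N i x₁ x₂ p
  | leg₁ : p 0 = x₁ → p 1 = i - N → 0 ≤ p 2 → p 2 ≤ i + 1 → OnGadget N i x₁ x₂ p
  | leg₂ : p 0 = x₂ → p 1 = N - i → 0 ≤ p 2 → p 2 ≤ i + 1 → OnGadget N i x₁ x₂ p
  | post : p 0 = i → (p 1 = -(N + 1) ∨ p 1 = N + 1) → p 2 ≤ i + 1 → OnGadget N i x₁ x₂ p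
  | bridge : p 2 = i + 1 → (p 1 = i - N ∨ p 1 = N - i) → OnGadget N i x₁ x₂ p
  | rise : p 2 = i + 1 → p 0 = i → (p 1 ≤ i - N ∨ N - i ≤ p 1) → OnGadget N i x₁ x₂ p

theorem onGadget_of_mem_carrier {N i x₁ x₂ : ℝ} {hi : 0 ≤ i} {hiN : i < N} {h₁ : x₁ ≠ i}
    {h₂ : x₂ ≠ i} {p : Pt3} (hp : p ∈ (gadget N i x₁ x₂ hi hiN h₁ h₂).carrier) :
    OnGadget N i x₁ x₂ p := by
  obtain ⟨a, hp⟩ := mem_iUnion.1 hp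
  have h0 := apply_mem_uIcc_of_mem_segment hp 0
  have h1 := apply_mem_uIcc_of_mem_segment hp 1
  have h2 := apply_mem_uIcc_of_mem_segment hp 2
  have hz : (0 : ℝ) ≤ i + 1 := by linarith
  fin_cases a <;>
    simp only [gadget, gadgetPts, Fin.isValue, Matrix.cons_val, Fin.reduceCastSucc,
      Fin.reduceSucc, Fin.reduceFinMk, uIcc_self, mem_singleton_iff, uIcc_of_le hz,
      uIcc_of_ge hz, mem_Icc] at h0 h1 h2
  · exact .leg₁ h0 h1 h2.1 h2.2
  · exact .bridge h2 (.inl h1)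
  · exact .rise h2 h0 (.inl (by rcases mem_uIcc.1 h1 with h | h <;> linarith))
  · exact .post h0 (.inl h1) h2.2
  · exact .spine h0 h2
  · exact .post h0 (.inr h1) h2.2
  · exact .rise h2 h0 (.inr (by rcases mem_uIcc.1 h1 with h | h <;> linarith))
  · exact .bridge h2 (.inr h1)
  · exact .leg₂ h0 h1 h2.1 h2.2

theorem OnGadget.eq_foot_of_lt {N i m x₁ x₂ y₁ y₂ : ℝ} {p : Pt3} (hi : 0 ≤ i) (hmN : m < N)
    (him : i < m) (hpi : OnGadget N i x₁ x₂ p) (hpm : OnGadget N m y₁ y₂ p) :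
    (x₁ = m ∧ p = gadgetPts N i x₁ x₂ 0) ∨ (x₂ = m ∧ p = gadgetPts N i x₁ x₂ 9) ∨
    (y₁ = i ∧ p = gadgetPts N m y₁ y₂ 0) ∨ (y₂ = i ∧ p = gadgetPts N m y₁ y₂ 9) := by
  rcases hpi with ⟨hx, hz⟩ | ⟨hx, hy, hz, hz'⟩ | ⟨hx, hy, hz, hz'⟩ | ⟨hx, hy | hy, hz⟩ |
      ⟨hz, hy | hy⟩ | ⟨hz, hx, hy | hy⟩ <;>
    rcases hpm with ⟨hx', hz''⟩ | ⟨hx', hy', hw, hw'⟩ | ⟨hx', hy', hw, hw'⟩ |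
      ⟨hx', hy' | hy', hw⟩ | ⟨hw, hy' | hy'⟩ | ⟨hw, hx', hy' | hy'⟩ <;>
    first
    | (exfalso; linarith)
    | exact .inl ⟨by linarith, eq_vec3_of_apply_eq hx hy hz''⟩
    | exact .inr (.inl ⟨by linarith, eq_vec3_of_apply_eq hx hy hz''⟩)
    | exact .inr (.inr (.inl ⟨by linarith, eq_vec3_of_apply_eq hx' hy' hz⟩))
    | exact .inr (.inr (.inr ⟨by linarith, eq_vec3_of_apply_eq hx' hy' hz⟩))

theorem OnGadget.eq_foot {N i m x₁ x₂ y₁ y₂ : ℝ} {p : Pt3} (hi : 0 ≤ i) (hm : 0 ≤ m)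
    (hiN : i < N) (hmN : m < N) (him : i ≠ m) (hpi : OnGadget N i x₁ x₂ p)
    (hpm : OnGadget N m y₁ y₂ p) :
    (x₁ = m ∧ p = gadgetPts N i x₁ x₂ 0) ∨ (x₂ = m ∧ p = gadgetPts N i x₁ x₂ 9) ∨
    (y₁ = i ∧ p = gadgetPts N m y₁ y₂ 0) ∨ (y₂ = i ∧ p = gadgetPts N m y₁ y₂ 9) := by
  rcases him.lt_or_gt with h | h
  · exact hpi.eq_foot_of_lt hi hmN h hpm
  · have := hpm.eq_foot_of_lt hm hiN h hpi
    tauto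

theorem AAString.pts_zero_mem_carrier (S : AAString) : S.pts 0 ∈ S.carrier :=
  mem_iUnion.2 ⟨⟨0, S.k_pos⟩, left_mem_segment ℝ _ _⟩

theorem AAString.pts_last_mem_carrier (S : AAString) : S.pts (Fin.last S.k) ∈ S.carrier := by
  refine mem_iUnion.2 ⟨⟨S.k - 1, by have := S.k_pos; omega⟩, ?_⟩
  convert right_mem_segment ℝ _ _
  ext
  simp only [Fin.val_last, Fin.succ_mk]
  have := S.k_pos
  omega

theorem mem_carrier_gadget_of_mem_Icc {N m x₁ x₂ y : ℝ} {hm : 0 ≤ m} {hmN : m < N}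
    {h₁ : x₁ ≠ m} {h₂ : x₂ ≠ m} (hy : y ∈ Icc (-(N + 1)) (N + 1)) :
    ![m, y, 0] ∈ (gadget N m x₁ x₂ hm hmN h₁ h₂).carrier := by
  refine mem_iUnion.2 ⟨(4 : Fin 9), vec3_mem_segment_of_mem_segment ?_⟩
  rwa [segment_eq_uIcc, uIcc_of_le (by linarith)]

theorem gadget_pts_zero_mem_carrier {N i m x₁ x₂ y₁ y₂ : ℝ} {hi : 0 ≤ i} {hiN : i < N}
    {h₁ : x₁ ≠ i} {h₂ : x₂ ≠ i} {hm : 0 ≤ m} {hmN : m < N} {h₁' : y₁ ≠ m} {h₂' : y₂ ≠ m}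
    (hx : x₁ = m) :
    (gadget N i x₁ x₂ hi hiN h₁ h₂).pts 0 ∈ (gadget N m y₁ y₂ hm hmN h₁' h₂').carrier := by
  change ![x₁, i - N, 0] ∈ _
  rw [hx]
  exact mem_carrier_gadget_of_mem_Icc ⟨by linarith, by linarith⟩

theorem gadget_pts_last_mem_carrier {N i m x₁ x₂ y₁ y₂ : ℝ} {hi : 0 ≤ i} {hiN : i < N}
    {h₁ : x₁ ≠ i} {h₂ : x₂ ≠ i} {hm : 0 ≤ m} {hmN : m < N} {h₁' : y₁ ≠ m} {h₂' : y₂ ≠ m}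
    (hx : x₂ = m) :
    (gadget N i x₁ x₂ hi hiN h₁ h₂).pts (Fin.last 9) ∈
      (gadget N m y₁ y₂ hm hmN h₁' h₂').carrier := by
  change ![x₂, N - i, 0] ∈ _
  rw [hx]
  exact mem_carrier_gadget_of_mem_Icc ⟨by linarith, by linarith⟩

theorem isStringContactRep_gadget {V : Type*} (G : SimpleGraph V) {N : ℝ} (idx : V → ℝ)
    (hidx : Function.Injective idx) (h0 : ∀ v, 0 ≤ idx v) (hN : ∀ v, idx v < N)
    (x₁ x₂ : V → ℝ) (h₁ : ∀ v, x₁ v ≠ idx v) (h₂ : ∀ v, x₂ v ≠ idx v)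
    (hG : ∀ u v, G.Adj u v ↔ (x₁ u = idx v ∨ x₂ u = idx v) ∨ (x₁ v = idx u ∨ x₂ v = idx u)) :
    IsStringContactRep G fun v => gadget N (idx v) (x₁ v) (x₂ v) (h0 v) (hN v) (h₁ v) (h₂ v) := by
  set Ψ := fun v => gadget N (idx v) (x₁ v) (x₂ v) (h0 v) (hN v) (h₁ v) (h₂ v)
  have eq_foot : ∀ u v, u ≠ v → ∀ p ∈ (Ψ u).carrier ∩ (Ψ v).carrier,
      (x₁ u = idx v ∧ p = (Ψ u).pts 0) ∨ (x₂ u = idx v ∧ p = (Ψ u).pts (Fin.last (Ψ u).k)) ∨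
      (x₁ v = idx u ∧ p = (Ψ v).pts 0) ∨ (x₂ v = idx u ∧ p = (Ψ v).pts (Fin.last (Ψ v).k)) :=
    fun u v huv p hp => (onGadget_of_mem_carrier hp.1).eq_foot (h0 u) (h0 v) (hN u) (hN v)
      (hidx.ne huv) (onGadget_of_mem_carrier hp.2)
  have fst_eq : ∀ u v, u ≠ v → ∀ p ∈ (Ψ u).carrier ∩ (Ψ v).carrier,
      p 0 = idx u ∨ p 0 = idx v := by
    intro u v huv p hp
    rcases eq_foot u v huv p hp with ⟨h, rfl⟩ | ⟨h, rfl⟩ | ⟨h, rfl⟩ | ⟨h, rfl⟩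
    exacts [.inr h, .inr h, .inl h, .inl h]
  refine ⟨fun u v huv p hp => ?_, fun u v w huv huw hvw p ⟨hu, hv, hw⟩ => ?_,
    fun u v huv => ?_⟩
  · rcases eq_foot u v huv p hp with ⟨-, rfl⟩ | ⟨-, rfl⟩ | ⟨-, rfl⟩ | ⟨-, rfl⟩ <;>
      simp [AAString.endpoints]
  · have := hidx.ne huv
    have := hidx.ne huw
    have := hidx.ne hvw
    rcases fst_eq u v huv p ⟨hu, hv⟩ with h | h <;>
      rcases fst_eq u w huw p ⟨hu, hw⟩ with h' | h' <;>
      rcases fst_eq v w hvw p ⟨hv, hw⟩ with h'' | h'' <;> simp_all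
  · rw [hG]
    constructor
    · rintro ⟨p, hp⟩
      rcases eq_foot u v huv p hp with ⟨h, -⟩ | ⟨h, -⟩ | ⟨h, -⟩ | ⟨h, -⟩ <;> tauto
    · rintro ((h | h) | (h | h))
      · exact ⟨_, (Ψ u).pts_zero_mem_carrier, gadget_pts_zero_mem_carrier h⟩
      · exact ⟨_, (Ψ u).pts_last_mem_carrier, gadget_pts_last_mem_carrier h⟩
      · exact ⟨_, gadget_pts_zero_mem_carrier h, (Ψ v).pts_zero_mem_carrier⟩
      · exact ⟨_, gadget_pts_last_mem_carrier h, (Ψ v).pts_last_mem_carrier⟩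

theorem SimpleGraph.exists_outNeighbors_card_le {V : Type*} [Fintype V] [DecidableEq V]
    (G : SimpleGraph V) [DecidableRel G.Adj] (f : Sym2 V → V × V)
    (hf : ∀ e ∈ G.edgeSet, e = s((f e).1, (f e).2)) {k : ℕ}
    (hk : ∀ w : V, (G.edgeFinset.filter (fun e => (f e).1 = w)).card ≤ k) :
    ∃ out : V → Finset V, (∀ v, (out v).card ≤ k) ∧ ∀ u v, G.Adj u v ↔ v ∈ out u ∨ u ∈ out v := by
  refine ⟨fun u => {v | G.Adj u v ∧ (f s(u, v)).1 = u}, fun u => ?_, fun u v => ?_⟩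
  · refine (Finset.card_le_card_of_injOn (fun v => s(u, v)) (fun v hv => ?_)
      (fun v₁ _ v₂ _ h => Sym2.congr_right.1 h)).trans (hk u)
    simpa using hv
  · simp only [Finset.mem_filter, Finset.mem_univ, true_and]
    refine ⟨fun h => ?_, by rintro (⟨h, -⟩ | ⟨h, -⟩) <;> [exact h; exact h.symm]⟩
    rcases Sym2.eq_iff.1 (hf _ (G.mem_edgeSet.2 h)) with ⟨h₁, -⟩ | ⟨-, h₂⟩
    · exact .inl ⟨h, h₁.symm⟩
    · exact .inr ⟨h.symm, by rw [Sym2.eq_swap]; exact h₂.symm⟩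

theorem Finset.exists_insert_eq_of_card_le_two {α : Type*} [DecidableEq α] {s : Finset α}
    (hs : s.card ≤ 2) (c : α) : ∃ a b, insert c s = {a, b, c} := by
  interval_cases h : s.card
  · exact ⟨c, c, by simp [Finset.card_eq_zero.1 h]⟩
  · obtain ⟨a, rfl⟩ := Finset.card_eq_one.1 h
    exact ⟨a, c, by ext; simp; tauto⟩
  · obtain ⟨a, b, -, rfl⟩ := Finset.card_eq_two.1 h
    exact ⟨a, b, by ext; simp; tauto⟩

theorem exists_pair_eq_iff_mem_of_card_le_two {V α : Type*} [DecidableEq α]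
    (out : V → Finset V) (hout : ∀ v, (out v).card ≤ 2) {e : V → α}
    (he : Function.Injective e) {c : α} (hc : ∀ v, e v ≠ c) :
    ∃ x₁ x₂ : V → α, ∀ u v, (x₁ u = e v ∨ x₂ u = e v) ↔ v ∈ out u := by
  choose x₁ x₂ hx using fun u =>
    Finset.exists_insert_eq_of_card_le_two ((Finset.card_image_le (f := e)).trans (hout u)) c
  refine ⟨x₁, x₂, fun u v => ?_⟩
  have := congrArg (e v ∈ ·) (hx u)
  simp only [Finset.mem_insert, Finset.mem_image, he.eq_iff, exists_eq_right,
    Finset.mem_singleton, hc v, false_or, or_false] at this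
  rw [this]
  exact or_congr eq_comm eq_comm

/-- If a finite simple graph admits an orientation with all out-degrees at most 2, then
it admits a string contact representation in ℝ³ of complexity at most 14. -/
theorem outdegreeTwo_orientation_stringContactRep
    {V : Type*} [Fintype V] [DecidableEq V]
    (G : SimpleGraph V) [DecidableRel G.Adj]
    (h : ∃ f : Sym2 V → V × V,
      (∀ e ∈ G.edgeSet, e = s((f e).1, (f e).2)) ∧
      ∀ w : V, (G.edgeFinset.filter (fun e => (f e).1 = w)).card ≤ 2) :
    ∃ Ψ : V → AAString, IsStringContactRep G Ψ ∧ ∀ v : V, (Ψ v).bends ≤ 14 := by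
  obtain ⟨f, hf, hdeg⟩ := h
  obtain ⟨out, hout, hadj⟩ := G.exists_outNeighbors_card_le f hf hdeg
  let idx : V → ℝ := fun v => (Fintype.equivFin V v : ℕ)
  have hidx : Function.Injective idx :=
    Nat.cast_injective.comp (Fin.val_injective.comp (Fintype.equivFin V).injective)
  have h0 : ∀ v, 0 ≤ idx v := fun v => Nat.cast_nonneg _
  have hN : ∀ v, idx v < Fintype.card V := fun v => Nat.cast_lt.2 (Fintype.equivFin V v).isLt
  obtain ⟨x₁, x₂, hx⟩ := exists_pair_eq_iff_mem_of_card_le_two out hout hidx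
    (c := -1) fun v => by linarith [h0 v]
  have hx_ne : ∀ v, x₁ v ≠ idx v ∧ x₂ v ≠ idx v := fun v =>
    not_or.1 fun h => G.irrefl ((hadj v v).2 (.inl ((hx v v).1 h)))
  refine ⟨_, isStringContactRep_gadget G idx hidx h0 hN x₁ x₂ (fun v => (hx_ne v).1)
    (fun v => (hx_ne v).2) fun u v => by rw [hadj, hx, hx], fun v => ?_⟩
  norm_num [AAString.bends, gadget]
end
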